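/- arXiv:2402.08332 — 4 statements merged into one kernel-verified Lean document; each statement's English description precedes it below -/
import Mathlib

section
/- Every minimal separator of a graph G induces a subgraph with independence number at most 2 if and only if G does not contain K_{2,3} as an induced minor. -/
open SimpleGraph

universe u v

section Defs

variable {V : Type u}

/-- An induced minor model of `H` in `G`. -/
def InducedMinorModel {W : Type v} (H : SimpleGraph W) (G : SimpleGraph V)
    (X : W → Set V) : Prop :=
  (∀ w, (X w).Nonempty) ∧ (∀ w, (G.induce (X w)).Connected) ∧
  (Pairwise fun w w' => Disjoint (X w) (X w')) ∧
  (Pairwise fun w w' => ((∃ x ∈ X w, ∃ y ∈ X w', G.Adj x y) ↔ H.Adj w w'))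

/-- `G` contains `H` as an induced minor. -/
def HasInducedMinor {W : Type v} (H : SimpleGraph W) (G : SimpleGraph V) : Prop :=
  ∃ X : W → Set V, InducedMinorModel H G X

/-- The complete bipartite graph `K_{2,3}`. -/
def K23 : SimpleGraph (Fin 2 ⊕ Fin 3) := completeBipartiteGraph (Fin 2) (Fin 3)

/-- `G` (as a whole graph) is a long prism. -/
def IsLongPrism (G : SimpleGraph V) : Prop :=
  ∃ (a₁ a₂ a₃ b₁ b₂ b₃ : V) (P₁ : G.Walk a₁ b₁) (P₂ : G.Walk a₂ b₂) (P₃ : G.Walk a₃ b₃),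
    P₁.IsPath ∧ P₂.IsPath ∧ P₃.IsPath ∧
    1 ≤ P₁.length ∧ 1 ≤ P₂.length ∧ 1 ≤ P₃.length ∧
    (2 ≤ P₁.length ∨ 2 ≤ P₂.length ∨ 2 ≤ P₃.length) ∧
    (∀ x : V, x ∈ P₁.support ∨ x ∈ P₂.support ∨ x ∈ P₃.support) ∧
    (∀ x : V, x ∈ P₁.support → x ∉ P₂.support) ∧
    (∀ x : V, x ∈ P₁.support → x ∉ P₃.support) ∧
    (∀ x : V, x ∈ P₂.support → x ∉ P₃.support) ∧
    (∀ x y : V, G.Adj x y ↔ (s(x, y) ∈ P₁.edges ∨ s(x, y) ∈ P₂.edges ∨ s(x, y) ∈ P₃.edges ∨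
      s(x, y) ∈ ({s(a₁, a₂), s(a₂, a₃), s(a₁, a₃), s(b₁, b₂), s(b₂, b₃), s(b₁, b₃)} :
        Set (Sym2 V))))

/-- `G` (as a whole graph) is a pyramid. -/
def IsPyramid (G : SimpleGraph V) : Prop :=
  ∃ (a b₁ b₂ b₃ : V) (P₁ : G.Walk a b₁) (P₂ : G.Walk a b₂) (P₃ : G.Walk a b₃),
    P₁.IsPath ∧ P₂.IsPath ∧ P₃.IsPath ∧
    1 ≤ P₁.length ∧ 1 ≤ P₂.length ∧ 1 ≤ P₃.length ∧
    ((2 ≤ P₁.length ∧ 2 ≤ P₂.length) ∨ (2 ≤ P₁.length ∧ 2 ≤ P₃.length) ∨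
      (2 ≤ P₂.length ∧ 2 ≤ P₃.length)) ∧
    (∀ x : V, x ∈ P₁.support ∨ x ∈ P₂.support ∨ x ∈ P₃.support) ∧
    (∀ x : V, x ∈ P₁.support → x ∈ P₂.support → x = a) ∧
    (∀ x : V, x ∈ P₁.support → x ∈ P₃.support → x = a) ∧
    (∀ x : V, x ∈ P₂.support → x ∈ P₃.support → x = a) ∧
    (∀ x y : V, G.Adj x y ↔ (s(x, y) ∈ P₁.edges ∨ s(x, y) ∈ P₂.edges ∨ s(x, y) ∈ P₃.edges ∨
      s(x, y) ∈ ({s(b₁, b₂), s(b₂, b₃), s(b₁, b₃)} : Set (Sym2 V))))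

/-- `G` (as a whole graph) is a theta. -/
def IsTheta (G : SimpleGraph V) : Prop :=
  ∃ (a b : V) (P₁ : G.Walk a b) (P₂ : G.Walk a b) (P₃ : G.Walk a b),
    P₁.IsPath ∧ P₂.IsPath ∧ P₃.IsPath ∧
    2 ≤ P₁.length ∧ 2 ≤ P₂.length ∧ 2 ≤ P₃.length ∧
    (∀ x : V, x ∈ P₁.support ∨ x ∈ P₂.support ∨ x ∈ P₃.support) ∧
    (∀ x : V, x ∈ P₁.support → x ∈ P₂.support → x = a ∨ x = b) ∧
    (∀ x : V, x ∈ P₁.support → x ∈ P₃.support → x = a ∨ x = b) ∧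
    (∀ x : V, x ∈ P₂.support → x ∈ P₃.support → x = a ∨ x = b) ∧
    (∀ x y : V, G.Adj x y ↔ (s(x, y) ∈ P₁.edges ∨ s(x, y) ∈ P₂.edges ∨ s(x, y) ∈ P₃.edges))

/-- `G` (as a whole graph) is the cube. -/
def IsCube (G : SimpleGraph V) : Prop :=
  ∃ v₁ v₂ v₃ v₄ v₅ v₆ x y : V,
    [v₁, v₂, v₃, v₄, v₅, v₆, x, y].Nodup ∧
    (∀ u : V, u ∈ [v₁, v₂, v₃, v₄, v₅, v₆, x, y]) ∧
    (∀ u w : V, G.Adj u w ↔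
      s(u, w) ∈ ({s(v₁, v₂), s(v₂, v₃), s(v₃, v₄), s(v₄, v₅), s(v₅, v₆), s(v₆, v₁),
        s(x, v₁), s(x, v₃), s(x, v₅), s(y, v₂), s(y, v₄), s(y, v₆)} : Set (Sym2 V)))

/-- `Q` is a sector of the wheel with rim `C` and center `x`. -/
def IsSectorOf (G : SimpleGraph V) (x : V) {w : V} (C : G.Walk w w)
    {p q : V} (Q : G.Walk p q) : Prop :=
  Q.IsPath ∧ 1 ≤ Q.length ∧ (∀ e ∈ Q.edges, e ∈ C.edges) ∧ G.Adj x p ∧ G.Adj x q ∧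
  (∀ u ∈ Q.support, u ≠ p → u ≠ q → ¬ G.Adj x u)

/-- The closed walk `C` together with the vertex `x` form a wheel in `G`,
i.e. `C` is a hole (a chordless cycle of length at least 4) and `x` has at least
three neighbors on `C`. -/
def IsWheelWith (G : SimpleGraph V) (x : V) {w : V} (C : G.Walk w w) : Prop :=
  C.IsCycle ∧ 4 ≤ C.length ∧ x ∉ C.support ∧
  (∀ y z : V, y ∈ C.support → z ∈ C.support → (G.Adj y z ↔ s(y, z) ∈ C.edges)) ∧
  (∃ n₁ n₂ n₃ : V, n₁ ∈ C.support ∧ n₂ ∈ C.support ∧ n₃ ∈ C.support ∧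
    n₁ ≠ n₂ ∧ n₁ ≠ n₃ ∧ n₂ ≠ n₃ ∧ G.Adj x n₁ ∧ G.Adj x n₂ ∧ G.Adj x n₃)

/-- `G` (as a whole graph) is a broken wheel: a wheel at least two of whose
sectors have length at least 2. -/
def IsBrokenWheel (G : SimpleGraph V) : Prop :=
  ∃ (x w : V) (C : G.Walk w w), IsWheelWith G x C ∧
    (∀ u : V, u = x ∨ u ∈ C.support) ∧
    ∃ (p₁ q₁ p₂ q₂ : V) (Q₁ : G.Walk p₁ q₁) (Q₂ : G.Walk p₂ q₂),
      IsSectorOf G x C Q₁ ∧ IsSectorOf G x C Q₂ ∧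
      2 ≤ Q₁.length ∧ 2 ≤ Q₂.length ∧ (∀ e ∈ Q₁.edges, e ∉ Q₂.edges)

/-- `G` (as a whole graph) belongs to the class `S` (subdivisions of `K_{1,3}`),
with extremities `e₁`, `e₂`, `e₃`. -/
def IsS (G : SimpleGraph V) (e₁ e₂ e₃ : V) : Prop :=
  ∃ (u : V) (P₁ : G.Walk u e₁) (P₂ : G.Walk u e₂) (P₃ : G.Walk u e₃),
    P₁.IsPath ∧ P₂.IsPath ∧ P₃.IsPath ∧
    1 ≤ P₁.length ∧ 1 ≤ P₂.length ∧ 1 ≤ P₃.length ∧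
    (∀ x : V, x ∈ P₁.support ∨ x ∈ P₂.support ∨ x ∈ P₃.support) ∧
    (∀ x : V, x ∈ P₁.support → x ∈ P₂.support → x = u) ∧
    (∀ x : V, x ∈ P₁.support → x ∈ P₃.support → x = u) ∧
    (∀ x : V, x ∈ P₂.support → x ∈ P₃.support → x = u) ∧
    (∀ x y : V, G.Adj x y ↔ (s(x, y) ∈ P₁.edges ∨ s(x, y) ∈ P₂.edges ∨ s(x, y) ∈ P₃.edges))

/-- `G` (as a whole graph) belongs to the class `T`, with extremities `e₁`, `e₂`, `e₃`. -/
def IsT (G : SimpleGraph V) (e₁ e₂ e₃ : V) : Prop :=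
  ∃ (t₁ t₂ t₃ : V) (P₁ : G.Walk t₁ e₁) (P₂ : G.Walk t₂ e₂) (P₃ : G.Walk t₃ e₃),
    P₁.IsPath ∧ P₂.IsPath ∧ P₃.IsPath ∧
    1 ≤ P₁.length ∧ 1 ≤ P₂.length ∧ 1 ≤ P₃.length ∧
    (∀ x : V, x ∈ P₁.support ∨ x ∈ P₂.support ∨ x ∈ P₃.support) ∧
    (∀ x : V, x ∈ P₁.support → x ∉ P₂.support) ∧
    (∀ x : V, x ∈ P₁.support → x ∉ P₃.support) ∧
    (∀ x : V, x ∈ P₂.support → x ∉ P₃.support) ∧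
    (∀ x y : V, G.Adj x y ↔ (s(x, y) ∈ P₁.edges ∨ s(x, y) ∈ P₂.edges ∨ s(x, y) ∈ P₃.edges ∨
      s(x, y) ∈ ({s(t₁, t₂), s(t₂, t₃), s(t₁, t₃)} : Set (Sym2 V))))

/-- `G` (as a whole graph) belongs to the class `M`, with extremities the two
endpoints `e₁`, `e₂` of the path and the center `e₃`. -/
def IsM (G : SimpleGraph V) (e₁ e₂ e₃ : V) : Prop :=
  ∃ P : G.Walk e₁ e₂,
    P.IsPath ∧ e₃ ∉ P.support ∧
    (∀ x : V, x = e₃ ∨ x ∈ P.support) ∧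
    (∀ x y : V, x ∈ P.support → y ∈ P.support → (G.Adj x y ↔ s(x, y) ∈ P.edges)) ∧
    ¬ G.Adj e₃ e₁ ∧ ¬ G.Adj e₃ e₂ ∧
    (∃ u w : V, u ∈ P.support ∧ w ∈ P.support ∧ u ≠ w ∧ G.Adj e₃ u ∧ G.Adj e₃ w)

/-- `G` belongs to `S ∪ T ∪ M` and its set of extremities is exactly `I`. -/
def IsSTMwithExtremities (G : SimpleGraph V) (I : Set V) : Prop :=
  ∃ e₁ e₂ e₃ : V, I = {e₁, e₂, e₃} ∧
    (IsS G e₁ e₂ e₃ ∨ IsT G e₁ e₂ e₃ ∨ IsM G e₁ e₂ e₃)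

/-- The interior of a path (its support minus the two endpoints). -/
def walkInterior {G : SimpleGraph V} {p q : V} (W : G.Walk p q) : Set V :=
  {v | v ∈ W.support ∧ v ≠ p ∧ v ≠ q}

/-- A broken wheel in `G` together with a frame: the rim is the concatenation
`P ++ Q ++ R ++ S` where `P = a…b` and `R = c…d` are sectors of length at least 2
(`a`, `b`, `c`, `d` in clockwise order). -/
structure BWFrame (G : SimpleGraph V) where
  x : V
  a : V
  b : V
  c : V
  d : V
  P : G.Walk a b
  Q : G.Walk b c
  R : G.Walk c d
  S : G.Walk d a
  hP : 2 ≤ P.length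
  hR : 2 ≤ R.length
  nondeg : ¬ (b = c ∧ d = a)
  cyc : (((P.append Q).append R).append S).IsCycle
  len4 : 4 ≤ (((P.append Q).append R).append S).length
  hx : x ∉ (((P.append Q).append R).append S).support
  chordless : ∀ y z : V, y ∈ (((P.append Q).append R).append S).support →
    z ∈ (((P.append Q).append R).append S).support →
    (G.Adj y z ↔ s(y, z) ∈ (((P.append Q).append R).append S).edges)
  adja : G.Adj x a
  adjb : G.Adj x b
  adjc : G.Adj x c
  adjd : G.Adj x d
  secP : ∀ u ∈ P.support, u ≠ a → u ≠ b → ¬ G.Adj x u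
  secR : ∀ u ∈ R.support, u ≠ c → u ≠ d → ¬ G.Adj x u

/-- The rim of a framed broken wheel. -/
def BWFrame.rim {G : SimpleGraph V} (F : BWFrame G) : G.Walk F.a F.a :=
  ((F.P.append F.Q).append F.R).append F.S

/-- The vertex set of a framed broken wheel. -/
def BWFrame.verts {G : SimpleGraph V} (F : BWFrame G) : Set V :=
  insert F.x {v | v ∈ F.rim.support}

/-- Optimality of a framed broken wheel `(W, F)`: no broken wheel of `G` has fewer
vertices, and subject to that the sum of the lengths of `Q` and `S` is minimal. -/
def BWFrame.Optimal {G : SimpleGraph V} (F : BWFrame G) : Prop :=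
  (∀ T : Set V, IsBrokenWheel (G.induce T) → F.verts.ncard ≤ T.ncard) ∧
  (∀ F' : BWFrame G, F'.verts.ncard = F.verts.ncard →
    F.Q.length + F.S.length ≤ F'.Q.length + F'.S.length)

/-- `S` separates `u` and `v` in `G`: both avoid `S` and every walk between them
meets `S`. -/
def Separates (G : SimpleGraph V) (S : Set V) (u v : V) : Prop :=
  u ∉ S ∧ v ∉ S ∧ ∀ p : G.Walk u v, ∃ w ∈ p.support, w ∈ S

/-- `S` is a minimal separator of `G`: a minimal `u,v`-separator for some `u`, `v`. -/
def IsMinimalSeparator (G : SimpleGraph V) (S : Set V) : Prop :=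
  ∃ u v : V, Separates G S u v ∧ ∀ T ⊆ S, Separates G T u v → T = S

/-- `A` is an independent set of `G`. -/
def IsIndepSet (G : SimpleGraph V) (A : Set V) : Prop :=
  ∀ x ∈ A, ∀ y ∈ A, x ≠ y → ¬ G.Adj x y

end Defs

/-!
If `S` is a minimal `u,v`-separator, every vertex of `S` has a neighbour in the component of
`G - S` containing `u` and in the one containing `v`. These two components, together with three
pairwise non-adjacent vertices of `S` as singletons, are the branch sets of a `K_{2,3}` model.

Conversely, let `B₁, B₂` be the branch sets on the side of size two and `Y₁, Y₂, Y₃` the others.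
The outer neighbourhood of `B₁` separates `B₁` from `B₂`, so it contains a minimal separator `T`
(the graph is finite). `T` meets every `Yⱼ`, because `T` misses `B₁` and `B₂`, and `B₁ ∪ Yⱼ ∪ B₂`
is connected. Vertices of `T` chosen in distinct `Yⱼ` are pairwise non-adjacent.
-/

section ReachableAvoiding

variable {V : Type u} {G : SimpleGraph V} {S : Set V} {a u v w : V}

def reachableAvoiding (G : SimpleGraph V) (S : Set V) (u : V) : Set V :=
  {w | ∃ p : G.Walk u w, ∀ x ∈ p.support, x ∉ S}

lemma mem_reachableAvoiding_self (hu : u ∉ S) : u ∈ reachableAvoiding G S u :=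
  ⟨.nil, by simpa using hu⟩

lemma notMem_of_mem_reachableAvoiding (hw : w ∈ reachableAvoiding G S u) : w ∉ S :=
  let ⟨p, hp⟩ := hw
  hp w p.end_mem_support

lemma mem_reachableAvoiding_symm (hw : w ∈ reachableAvoiding G S u) :
    u ∈ reachableAvoiding G S w :=
  let ⟨p, hp⟩ := hw
  ⟨p.reverse, fun x hx => hp x (by simpa using hx)⟩

lemma mem_reachableAvoiding_trans (hw : w ∈ reachableAvoiding G S u)
    (hv : v ∈ reachableAvoiding G S w) : v ∈ reachableAvoiding G S u := by
  obtain ⟨p, hp⟩ := hw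
  obtain ⟨q, hq⟩ := hv
  refine ⟨p.append q, fun x hx => ?_⟩
  rw [Walk.mem_support_append_iff] at hx
  rcases hx with hx | hx
  exacts [hp x hx, hq x hx]

lemma mem_reachableAvoiding_of_adj (hw : w ∈ reachableAvoiding G S u) (h : G.Adj w v)
    (hv : v ∉ S) : v ∈ reachableAvoiding G S u :=
  mem_reachableAvoiding_trans hw
    ⟨h.toWalk, by simpa using ⟨notMem_of_mem_reachableAvoiding hw, hv⟩⟩

lemma support_subset_reachableAvoiding (p : G.Walk u w) (hp : ∀ x ∈ p.support, x ∉ S) :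
    ∀ x ∈ p.support, x ∈ reachableAvoiding G S u := by
  classical
  intro x hx
  exact ⟨p.takeUntil x hx, fun y hy => hp y (p.support_takeUntil_subset_support hx hy)⟩

lemma connected_induce_reachableAvoiding (hu : u ∉ S) :
    (G.induce (reachableAvoiding G S u)).Connected := by
  rw [connected_iff_exists_forall_reachable]
  refine ⟨⟨u, mem_reachableAvoiding_self hu⟩, fun ⟨w, p, hp⟩ => ?_⟩
  exact (p.induce _ (support_subset_reachableAvoiding p hp)).reachable

lemma subset_reachableAvoiding_of_connected {C : Set V} (hC : (G.induce C).Preconnected)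
    (hCS : Disjoint C S) (ha : a ∈ C) (haR : a ∈ reachableAvoiding G S u) :
    C ⊆ reachableAvoiding G S u := by
  intro c hc
  by_contra hcR
  obtain ⟨q⟩ := hC ⟨a, ha⟩ ⟨c, hc⟩
  obtain ⟨d, -, hd₁, hd₂⟩ :=
    q.exists_boundary_dart (Subtype.val ⁻¹' reachableAvoiding G S u) haR hcR
  exact hd₂ (mem_reachableAvoiding_of_adj hd₁ d.adj (hCS.notMem_of_mem_left d.snd.2))

lemma reachableAvoiding_subset {B : Set V} (hu : u ∈ B)
    (hS : ∀ x ∈ B, ∀ y ∉ B, G.Adj x y → y ∈ S) : reachableAvoiding G S u ⊆ B := by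
  rintro w ⟨p, hp⟩
  by_contra hw
  obtain ⟨d, hd, hd₁, hd₂⟩ := p.exists_boundary_dart B hu hw
  exact hp _ (p.dart_snd_mem_support_of_mem_darts hd) (hS _ hd₁ _ hd₂ d.adj)

end ReachableAvoiding

section Separators

variable {V : Type u} {G : SimpleGraph V} {S : Set V} {s u v w x y : V}

lemma separates_iff :
    Separates G S u v ↔ u ∉ S ∧ v ∉ S ∧ v ∉ reachableAvoiding G S u := by
  simp [Separates, reachableAvoiding]

lemma Separates.symm (h : Separates G S u v) : Separates G S v u := by
  rw [separates_iff] at h ⊢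
  exact ⟨h.2.1, h.1, fun hu => h.2.2 (mem_reachableAvoiding_symm hu)⟩

lemma Separates.notMem_reachableAvoiding (h : Separates G S u v)
    (hw : w ∈ reachableAvoiding G S v) : w ∉ reachableAvoiding G S u := fun hw' =>
  (separates_iff.1 h).2.2 (mem_reachableAvoiding_trans hw' (mem_reachableAvoiding_symm hw))

lemma Separates.disjoint_reachableAvoiding (h : Separates G S u v) :
    Disjoint (reachableAvoiding G S u) (reachableAvoiding G S v) :=
  Set.disjoint_right.2 fun _ => h.notMem_reachableAvoiding

lemma Separates.not_adj_of_mem_reachableAvoiding (h : Separates G S u v)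
    (hx : x ∈ reachableAvoiding G S u) (hy : y ∈ reachableAvoiding G S v) : ¬ G.Adj x y :=
  fun hxy => h.notMem_reachableAvoiding hy
    (mem_reachableAvoiding_of_adj hx hxy (notMem_of_mem_reachableAvoiding hy))

lemma Separates.exists_adj_of_minimal (h : Separates G S u v)
    (hmin : ∀ T ⊆ S, Separates G T u v → T = S) (hs : s ∈ S) :
    ∃ x ∈ reachableAvoiding G S u, G.Adj x s := by
  by_contra! hno
  suffices hsep : Separates G (S \ {s}) u v by
    have : s ∈ S \ {s} := (hmin _ Set.sdiff_subset hsep).symm ▸ hs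
    exact this.2 rfl
  obtain ⟨hu, hv, hv'⟩ := separates_iff.1 h
  refine ⟨fun h => hu h.1, fun h => hv h.1, fun p => ?_⟩
  obtain ⟨d, hd, hd₁, hd₂⟩ := p.exists_boundary_dart _ (mem_reachableAvoiding_self hu) hv'
  refine ⟨d.snd, p.dart_snd_mem_support_of_mem_darts hd, ?_, ?_⟩
  · by_contra hdS
    exact hd₂ (mem_reachableAvoiding_of_adj hd₁ d.adj hdS)
  · rintro (hds : d.snd = s)
    exact hno _ hd₁ (hds ▸ d.adj)

lemma Separates.exists_minimal_subset [Finite V] (h : Separates G S u v) :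
    ∃ T ⊆ S, Separates G T u v ∧ ∀ T' ⊆ T, Separates G T' u v → T' = T := by
  obtain ⟨T, hTS, hT⟩ := exists_minimal_le_of_wellFoundedLT (Separates G · u v) S h
  exact ⟨T, hTS, hT.1, fun T' hT'T hT' => le_antisymm hT'T (hT.2 hT' hT'T)⟩

end Separators

section InducedMinor

variable {V : Type u} {G : SimpleGraph V}

lemma inducedMinorModel_completeBipartiteGraph {α β : Type*} {B : α → Set V} {Y : β → Set V}
    (hB : ∀ i, (G.induce (B i)).Connected) (hY : ∀ j, (G.induce (Y j)).Connected)
    (hBB : Pairwise fun i i' => Disjoint (B i) (B i') ∧ ∀ x ∈ B i, ∀ y ∈ B i', ¬ G.Adj x y)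
    (hYY : Pairwise fun j j' => Disjoint (Y j) (Y j') ∧ ∀ x ∈ Y j, ∀ y ∈ Y j', ¬ G.Adj x y)
    (hBY : ∀ i j, Disjoint (B i) (Y j) ∧ ∃ x ∈ B i, ∃ y ∈ Y j, G.Adj x y) :
    InducedMinorModel (completeBipartiteGraph α β) G (Sum.elim B Y) := by
  refine ⟨?_, ?_, ?_, ?_⟩
  · rintro (i | j)
    exacts [Set.nonempty_coe_sort.1 (hB i).nonempty, Set.nonempty_coe_sort.1 (hY j).nonempty]
  · rintro (i | j)
    exacts [hB i, hY j]
  · rintro (i | j) (i' | j') hne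
    · exact (hBB fun h => hne (congrArg _ h)).1
    · exact (hBY i j').1
    · exact (hBY i' j).1.symm
    · exact (hYY fun h => hne (congrArg _ h)).1
  · rintro (i | j) (i' | j') hne
    · simpa using (hBB fun h => hne (congrArg _ h)).2
    · simpa using (hBY i j').2
    · obtain ⟨x, hx, y, hy, hxy⟩ := (hBY i' j).2
      simpa using ⟨y, hy, x, hx, hxy.symm⟩
    · simpa using (hYY fun h => hne (congrArg _ h)).2

lemma IsMinimalSeparator.hasInducedMinor_completeBipartiteGraph {β : Type*} {S : Set V}
    (hS : IsMinimalSeparator G S) {f : β → V} (hf : Function.Injective f) (hfS : ∀ j, f j ∈ S)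
    (hind : Pairwise fun j j' => ¬ G.Adj (f j) (f j')) :
    HasInducedMinor (completeBipartiteGraph (Fin 2) β) G := by
  obtain ⟨u, v, hsep, hmin⟩ := hS
  set w : Fin 2 → V := ![u, v]
  have hw : ∀ i, w i ∉ S := by simp [Fin.forall_fin_two, w, hsep.1, hsep.2.1]
  have hsep' : Pairwise fun i i' => Separates G S (w i) (w i') := by
    simp [Pairwise, Fin.forall_fin_two, w, hsep, hsep.symm]
  have hfull : ∀ i, ∀ s ∈ S, ∃ x ∈ reachableAvoiding G S (w i), G.Adj x s := by
    simp only [Fin.forall_fin_two]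
    exact ⟨fun s => hsep.exists_adj_of_minimal hmin,
      fun s => hsep.symm.exists_adj_of_minimal fun T hT hT' => hmin T hT hT'.symm⟩
  refine ⟨_, inducedMinorModel_completeBipartiteGraph (Y := fun j => {f j})
    (fun i => connected_induce_reachableAvoiding (hw i)) (fun j => by simp)
    (fun i i' hii' => ⟨(hsep' hii').disjoint_reachableAvoiding,
      fun x hx y hy => (hsep' hii').not_adj_of_mem_reachableAvoiding hx hy⟩)
    (fun j j' hjj' => ⟨by simpa using hf.ne hjj', by simpa using hind hjj'⟩)
    (fun i j => ⟨?_, ?_⟩)⟩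
  · exact Set.disjoint_singleton_right.2 fun h => notMem_of_mem_reachableAvoiding h (hfS j)
  · obtain ⟨x, hx, hxf⟩ := hfull i (f j) (hfS j)
    exact ⟨x, hx, f j, rfl, hxf⟩

lemma InducedMinorModel.exists_minimalSeparator [Finite V] {β : Type*}
    {X : Fin 2 ⊕ β → Set V} (hX : InducedMinorModel (completeBipartiteGraph (Fin 2) β) G X) :
    ∃ S, IsMinimalSeparator G S ∧ ∃ f : β → V, Function.Injective f ∧ (∀ j, f j ∈ S) ∧
      Pairwise fun j j' => ¬ G.Adj (f j) (f j') := by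
  obtain ⟨hnonempty, hconn, hdisj, hadj⟩ := hX
  obtain ⟨u, hu⟩ := hnonempty (.inl 0)
  obtain ⟨v, hv⟩ := hnonempty (.inl 1)
  have hBY : ∀ i j, ∃ x ∈ X (.inl i), ∃ y ∈ X (.inr j), G.Adj x y := fun i j =>
    (@hadj (.inl i) (.inr j) Sum.inl_ne_inr).2 (by simp)
  set N := {y | y ∉ X (.inl 0) ∧ ∃ x ∈ X (.inl 0), G.Adj x y}
  have hB₁N : Disjoint (X (.inl 0)) N := Set.disjoint_left.2 fun _ hx hxN => hxN.1 hx
  have hB₂N : Disjoint (X (.inl 1)) N := by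
    refine Set.disjoint_left.2 fun y hy ⟨_, x, hx, hxy⟩ => ?_
    simpa using (hadj (by simp)).1 ⟨x, hx, y, hy, hxy⟩
  have hN : Separates G N u v := by
    refine separates_iff.2 ⟨hB₁N.notMem_of_mem_left hu, hB₂N.notMem_of_mem_left hv, fun hvR => ?_⟩
    have hsub := reachableAvoiding_subset hu fun x hx y hy hxy => (⟨hy, x, hx, hxy⟩ : y ∈ N)
    exact (hdisj (by simp)).notMem_of_mem_left (hsub hvR) hv
  obtain ⟨T, hTN, hT, hTmin⟩ := hN.exists_minimal_subset
  have hmeet : ∀ j, ∃ y ∈ X (.inr j), y ∈ T := by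
    intro j
    by_contra! hYT
    have hB₁R : X (.inl 0) ⊆ reachableAvoiding G T u :=
      subset_reachableAvoiding_of_connected (hconn _).preconnected (hB₁N.mono_right hTN) hu
        (mem_reachableAvoiding_self (separates_iff.1 hT).1)
    obtain ⟨x, hx, y, hy, hxy⟩ := hBY 0 j
    have hYR : X (.inr j) ⊆ reachableAvoiding G T u :=
      subset_reachableAvoiding_of_connected (hconn _).preconnected (Set.disjoint_left.2 hYT) hy
        (mem_reachableAvoiding_of_adj (hB₁R hx) hxy (hYT y hy))
    obtain ⟨z, hz, y', hy', hzy⟩ := hBY 1 j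
    have hB₂T : Disjoint (X (.inl 1)) T := hB₂N.mono_right hTN
    have hB₂R : X (.inl 1) ⊆ reachableAvoiding G T u :=
      subset_reachableAvoiding_of_connected (hconn _).preconnected hB₂T hz
        (mem_reachableAvoiding_of_adj (hYR hy') hzy.symm (hB₂T.notMem_of_mem_left hz))
    exact (separates_iff.1 hT).2.2 (hB₂R hv)
  choose f hfY hfT using hmeet
  refine ⟨T, ⟨u, v, hT, hTmin⟩, f, fun j j' hjj' => ?_, hfT, fun j j' hjj' hff => ?_⟩
  · by_contra hne
    exact (hdisj (by simpa using hne)).notMem_of_mem_left (hfY j) (hjj' ▸ hfY j')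
  · simpa [hjj'] using (hadj (by simpa using hjj')).1 ⟨_, hfY j, _, hfY j', hff⟩

end InducedMinor

/-- Every minimal separator of `G` induces a subgraph with independence number at
most 2 iff `G` has no `K_{2,3}` induced minor. -/
theorem stmt13 {V : Type u} [Fintype V] (G : SimpleGraph V) :
    (∀ S : Set V, IsMinimalSeparator G S →
      ∀ A ⊆ S, _root_.IsIndepSet G A → A.ncard ≤ 2) ↔
    ¬ HasInducedMinor K23 G := by
  constructor
  · rintro hsmall ⟨X, hX⟩
    obtain ⟨S, hS, f, hf, hfS, hind⟩ := InducedMinorModel.exists_minimalSeparator hX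
    have hA : _root_.IsIndepSet G (Set.range f) := by
      rintro _ ⟨j, rfl⟩ _ ⟨j', rfl⟩ hne
      exact hind fun h => hne (congrArg f h)
    have := hsmall S hS _ (Set.range_subset_iff.2 hfS) hA
    simp [Set.ncard_range_of_injective hf] at this
  · intro hK S hS A hAS hA
    by_contra! hA3
    have hcard : 3 ≤ Nat.card A := by rw [Nat.card_coe_set_eq]; omega
    let e : Fin 3 ↪ A := (Fin.castLEEmb hcard).trans (Finite.equivFin A).symm.toEmbedding
    have he : Function.Injective (fun j => (e j : V)) := Subtype.val_injective.comp e.injective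
    exact hK (hS.hasInducedMinor_completeBipartiteGraph he (fun j => hAS (e j).2)
      fun j j' hjj' => hA _ (e j).2 _ (e j').2 (he.ne hjj'))
end

section
/- In a perfect graph G, a set S of vertices is the union of two cliques if and only if the subgraph induced by S has independence number at most 2. -/
open SimpleGraph

universe u v

/-!
A 2-colouring of `H = Gᶜ[S]` splits `S` into two cliques of `G`, and an independent set meets
each clique at most once; so it suffices to show that `H` is bipartite when `α(G[S]) ≤ 2`.
Otherwise take an odd cycle of `H`, of length `n`, on a vertex set `T`. Every colour class of
`G[T]` is an independent set, hence has at most two vertices, so `n ≤ 2 χ(G[T])`. A clique of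
`G[T]` contains no two consecutive vertices of the cycle, so `2 ω(G[T]) < n` as `n` is odd. Thus
`ω(G[T]) < χ(G[T])`, contradicting perfection.
-/

theorem isIndepSet_iff_isIndepSet {V : Type*} {G : SimpleGraph V} {A : Set V} :
    _root_.IsIndepSet G A ↔ G.IsIndepSet A :=
  Iff.rfl

namespace SimpleGraph

variable {V : Type*} {G : SimpleGraph V}

theorem IsClique.ncard_inter_le_one {K A : Set V} (hK : G.IsClique K) (hA : G.IsIndepSet A) :
    (A ∩ K).ncard ≤ 1 := by
  have hsub : (A ∩ K).Subsingleton := fun _ ha _ hb =>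
    by_contra fun hne => hA ha.1 hb.1 hne (hK ha.2 hb.2 hne)
  have := hsub.finite.to_subtype
  exact Set.ncard_le_one_iff_subsingleton.mpr hsub

theorem IsIndepSet.ncard_le_two_of_subset_union {K₁ K₂ A : Set V}
    (hA : G.IsIndepSet A) (h₁ : G.IsClique K₁) (h₂ : G.IsClique K₂) (hsub : A ⊆ K₁ ∪ K₂) :
    A.ncard ≤ 2 :=
  calc A.ncard = (A ∩ K₁ ∪ A ∩ K₂).ncard := by
        rw [← Set.inter_union_distrib_left, Set.inter_eq_left.mpr hsub]
    _ ≤ (A ∩ K₁).ncard + (A ∩ K₂).ncard := Set.ncard_union_le _ _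
    _ ≤ 1 + 1 := add_le_add (h₁.ncard_inter_le_one hA) (h₂.ncard_inter_le_one hA)

theorem exists_isClique_union_of_colorable_compl_induce {S : Set V}
    (h : (Gᶜ.induce S).Colorable 2) :
    ∃ K₁ K₂ : Set V, G.IsClique K₁ ∧ G.IsClique K₂ ∧ S = K₁ ∪ K₂ := by
  obtain ⟨C⟩ := h
  have hclique : ∀ i, G.IsClique (Subtype.val '' C.colorClass i) := by
    rintro i _ ⟨a, ha, rfl⟩ _ ⟨b, hb, rfl⟩ hne
    by_contra hnadj
    exact C.valid ((compl_adj G _ _).mpr ⟨hne, hnadj⟩) (ha.trans hb.symm)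
  refine ⟨_, _, hclique 0, hclique 1, Set.ext fun v => ⟨fun hv => ?_, ?_⟩⟩
  · rcases Fin.exists_fin_two.mp ⟨C ⟨v, hv⟩, rfl⟩ with h | h
    · exact Or.inl ⟨⟨v, hv⟩, h, rfl⟩
    · exact Or.inr ⟨⟨v, hv⟩, h, rfl⟩
  · rintro (⟨a, -, rfl⟩ | ⟨a, -, rfl⟩) <;> exact a.2

theorem ncard_le_mul_of_colorable_induce {T : Set V} {k m : ℕ}
    (hcol : (G.induce T).Colorable k) (hα : ∀ A ⊆ T, G.IsIndepSet A → A.ncard ≤ m) :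
    T.ncard ≤ k * m := by
  obtain ⟨C⟩ := hcol
  have hcover : T = ⋃ i, Subtype.val '' C.colorClass i := by
    refine Set.Subset.antisymm (fun v hv => Set.mem_iUnion.mpr ⟨C ⟨v, hv⟩, ⟨v, hv⟩, rfl, rfl⟩) ?_
    exact Set.iUnion_subset fun i => Subtype.coe_image_subset T _
  have hclass : ∀ i, (Subtype.val '' C.colorClass i).ncard ≤ m := by
    refine fun i => hα _ (Subtype.coe_image_subset T _) ?_
    rintro _ ⟨a, ha, rfl⟩ _ ⟨b, hb, rfl⟩ hne
    exact C.isIndepSet_colorClass i ha hb (ne_of_apply_ne _ hne)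
  calc T.ncard = (⋃ i, Subtype.val '' C.colorClass i).ncard := congrArg Set.ncard hcover
    _ ≤ ∑ i, (Subtype.val '' C.colorClass i).ncard := Set.ncard_iUnion_le_of_fintype _
    _ ≤ ∑ _i : Fin k, m := Finset.sum_le_sum fun i _ => hclass i
    _ = k * m := by simp

theorem two_mul_ncard_lt_of_isIndepSet_cycleGraph {n : ℕ} (hn : Odd n) (h3 : 3 ≤ n)
    {I : Set (Fin n)} (hI : (cycleGraph n).IsIndepSet I) : 2 * I.ncard < n := by
  have : NeZero n := ⟨hn.pos.ne'⟩
  have hdisj : Disjoint I ((· + 1) '' I) := by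
    refine Set.disjoint_left.mpr fun i hi ⟨j, hj, hji⟩ => ?_
    have hone : (1 : Fin n).val = 1 := by rw [Fin.val_one', Nat.mod_eq_of_lt (by omega)]
    refine hI hj hi (fun h => ?_) (cycleGraph_adj'.mpr (Or.inr ?_))
    · have := congrArg Fin.val (add_eq_left.mp (hji.trans h.symm))
      rw [hone, Fin.val_zero] at this
      exact one_ne_zero this
    · rw [← hji, add_sub_cancel_left, hone]
  have hle : (I ∪ (· + 1) '' I).ncard ≤ n := by
    simpa using Set.ncard_le_ncard (Set.subset_univ (I ∪ (· + 1) '' I))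
  rw [Set.ncard_union_eq hdisj, Set.ncard_image_of_injective _ (add_left_injective 1)] at hle
  obtain ⟨k, rfl⟩ := hn
  omega

theorem cliqueNum_lt_chromaticNumber_of_copy_cycleGraph_compl {n : ℕ} (hn : Odd n)
    (h3 : 3 ≤ n) (f : Copy (cycleGraph n) Gᶜ)
    (hα : ∀ A ⊆ Set.range f, G.IsIndepSet A → A.ncard ≤ 2) :
    ((G.induce (Set.range f)).cliqueNum : ℕ∞) < (G.induce (Set.range f)).chromaticNumber := by
  set T := Set.range f
  have hclique : 2 * (G.induce T).cliqueNum < n := by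
    obtain ⟨K, hK⟩ := (G.induce T).exists_isNClique_cliqueNum
    let e := Equiv.ofInjective f f.injective
    have hI : (cycleGraph n).IsIndepSet (e ⁻¹' K) := fun i hi j hj hne hadj =>
      ((compl_adj G _ _).mp (f.toHom.map_adj hadj)).2 (hK.isClique hi hj (e.injective.ne hne))
    have := two_mul_ncard_lt_of_isIndepSet_cycleGraph hn h3 hI
    rwa [Set.ncard_preimage_of_injective_subset_range e.injective (by simp),
      Set.ncard_coe_finset, hK.card_eq] at this
  refine lt_of_not_ge fun hle => ?_
  have hcol := ncard_le_mul_of_colorable_induce (chromaticNumber_le_iff_colorable.mp hle) hα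
  have hT : T.ncard = n := (Set.ncard_range_of_injective f.injective).trans (Nat.card_fin n)
  omega

namespace Walk

/-- Cutting `p` at the repeated vertex gives two closed walks whose lengths add up to
`p.length`, so one of them is odd. -/
theorem exists_odd_length_lt_of_getVert_eq {u : V} {p : G.Walk u u} (hp : Odd p.length)
    {i j : ℕ} (hi : 0 < i) (hij : i < j) (hj : j ≤ p.length) (h : p.getVert i = p.getVert j) :
    ∃ (v : V) (q : G.Walk v v), Odd q.length ∧ q.length < p.length := by
  let inner : G.Walk (p.getVert i) (p.getVert i) :=
    ((p.drop i).take (j - i)).copy rfl (by rw [drop_getVert, Nat.add_sub_cancel' hij.le, h])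
  let outer : G.Walk u u := (p.take i).append ((p.drop j).copy h.symm rfl)
  have hinner : inner.length = j - i := by
    simp only [inner, length_copy, take_length, drop_length]
    omega
  have houter : outer.length = i + (p.length - j) := by
    simp only [outer, length_append, length_copy, take_length, drop_length]
    omega
  have hsum : p.length = inner.length + outer.length := by omega
  rcases Nat.even_or_odd inner.length with heven | hodd
  · exact ⟨u, outer, (Nat.odd_add'.mp (hsum ▸ hp)).mpr heven, by omega⟩
  · exact ⟨_, inner, hodd, by omega⟩

theorem exists_isCycle_odd_length {u : V} (p : G.Walk u u) (hp : Odd p.length) :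
    ∃ (v : V) (c : G.Walk v v), c.IsCycle ∧ Odd c.length := by
  induction hlen : p.length using Nat.strong_induction_on generalizing u p with
  | _ n ih =>
  by_cases hpath : p.tail.IsPath
  · refine ⟨u, p, isCycle_iff_isPath_tail_and_le_length.mpr ⟨hpath, ?_⟩, hp⟩
    obtain ⟨_ | k, hk⟩ := hp
    · have hadj := p.adj_getVert_succ (i := 0) (by omega)
      rw [getVert_zero, zero_add, show 1 = p.length by omega, getVert_length] at hadj
      exact (hadj.ne rfl).elim
    · omega
  · rw [← IsPath.getVert_injOn_iff] at hpath
    simp only [Set.InjOn, Set.mem_ofPred_eq, getVert_tail, length_tail, not_forall] at hpath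
    obtain ⟨i, hi, j, hj, heq, hne⟩ := hpath
    have hpos := hp.pos
    have shorten : ∀ i j, i < j → j ≤ p.length - 1 → p.getVert (i + 1) = p.getVert (j + 1) →
        ∃ (v : V) (c : G.Walk v v), c.IsCycle ∧ Odd c.length := fun i j hij hj heq =>
      have ⟨_, q, hq, hlt⟩ :=
        p.exists_odd_length_lt_of_getVert_eq hp i.succ_pos (by omega) (by omega) heq
      ih _ (hlen ▸ hlt) q hq rfl
    rcases Nat.lt_or_gt_of_ne hne with hij | hji
    · exact shorten i j hij hj heq
    · exact shorten j i hji hi heq.symm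

end Walk

end SimpleGraph

theorem stmt15_general {V : Type u} (G : SimpleGraph V)
    (hperf : ∀ S : Set V, (G.induce S).chromaticNumber = ((G.induce S).cliqueNum : ℕ∞))
    (S : Set V) :
    (∃ K₁ K₂ : Set V, G.IsClique K₁ ∧ G.IsClique K₂ ∧ S = K₁ ∪ K₂) ↔
    (∀ A ⊆ S, _root_.IsIndepSet G A → A.ncard ≤ 2) := by
  refine ⟨fun ⟨K₁, K₂, h₁, h₂, hS⟩ A hA hind => ?_, fun hα => ?_⟩
  · exact (isIndepSet_iff_isIndepSet.mp hind).ncard_le_two_of_subset_union h₁ h₂ (hS ▸ hA)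
  refine exists_isClique_union_of_colorable_compl_induce
    (two_colorable_iff_forall_loop_even.mpr fun u p => Nat.not_odd_iff_even.mp fun hodd => ?_)
  obtain ⟨v, c, hc, hc_odd⟩ := p.exists_isCycle_odd_length hodd
  obtain ⟨f⟩ := (cycleGraph_isContained_iff hc.three_le_length).mpr ⟨v, c, hc, rfl⟩
  let g : Copy (cycleGraph c.length) Gᶜ := (Embedding.induce S).toCopy.comp f
  have hgS : Set.range g ⊆ S := by
    rintro _ ⟨i, rfl⟩
    exact (f i).2
  have hlt := cliqueNum_lt_chromaticNumber_of_copy_cycleGraph_compl hc_odd hc.three_le_length g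
    fun A hA hind => hα A (hA.trans hgS) (isIndepSet_iff_isIndepSet.mpr hind)
  exact hlt.ne (hperf _).symm

/-- In a perfect graph, a vertex set is a union of two cliques iff it induces a
subgraph with independence number at most 2. -/
theorem stmt15 {V : Type u} [Fintype V] (G : SimpleGraph V)
    (hperf : ∀ S : Set V, (G.induce S).chromaticNumber = ((G.induce S).cliqueNum : ℕ∞))
    (S : Set V) :
    (∃ K₁ K₂ : Set V, G.IsClique K₁ ∧ G.IsClique K₂ ∧ S = K₁ ∪ K₂) ↔
    (∀ A ⊆ S, _root_.IsIndepSet G A → A.ncard ≤ 2) :=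
  stmt15_general G hperf S
end

section
/- Let G be a graph containing an induced subgraph isomorphic to a co-domino with vertices a1, a2, v1, v2, v3, v4 (edges v1v2, v2v3, v3v4, v4v1, a1v1, a1v2, a2v3, a2v4). If some connected component of G minus (N(v1) ∪ N(v2) ∪ N(v3) ∪ N(v4)) contains a neighbor of a1 and a neighbor of a2, then G contains a long prism as an induced subgraph. -/
open SimpleGraph

universe u v

/-!
A shortest path `P` from `a₁` to `a₂` in `G[C ∪ {a₁, a₂}]` is chordless, and its interior lies
in `C`, so it is anticomplete to the square `v₁v₂v₃v₄`. Hence `P`, `v₁v₄` and `v₂v₃` are the three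
paths of an induced prism with triangles `a₁v₁v₂` and `a₂v₄v₃`, and it is long because `a₁a₂` is
not an edge.
-/

namespace SimpleGraph

variable {V : Type u} {W : Type*} {G : SimpleGraph V} {G' : SimpleGraph W}

namespace Walk

lemma exists_isSubwalk_of_mem_support {u v x y : V} {p : G.Walk u v} (hx : x ∈ p.support)
    (hy : y ∈ p.support) :
    (∃ q : G.Walk x y, q.IsSubwalk p) ∨ ∃ q : G.Walk y x, q.IsSubwalk p := by
  classical
  have hsplit := (p.take_spec hx).symm
  by_cases hyd : y ∈ (p.dropUntil x hx).support
  · exact .inl ⟨_, (isSubwalk_of_append_left ((p.dropUntil x hx).take_spec hyd).symm).trans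
      (isSubwalk_of_append_right hsplit)⟩
  · have hyt : y ∈ (p.takeUntil x hx).support := by
      rw [hsplit, mem_support_append_iff] at hy
      exact hy.resolve_right hyd
    exact .inr ⟨_, (isSubwalk_of_append_right ((p.takeUntil x hx).take_spec hyt).symm).trans
      (isSubwalk_of_append_left hsplit)⟩

/-- Every subwalk of a shortest walk is shortest, so a subwalk joining the ends of a chord has
length one, i.e. it is the chord itself. -/
theorem isChordless_of_length_eq_dist {u v : V} (p : G.Walk u v)
    (hp : p.length = G.dist u v) : p.IsChordless := by
  refine isChordless_iff_forall_mem_edges.2 fun x y hx hy hxy => ?_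
  have subwalk_eq_toWalk {a b : V} (q : G.Walk a b) (hq : q.IsSubwalk p) (hab : G.Adj a b) :
      hab.toWalk.IsSubwalk p := by
    have hq1 : q.length = 1 := by
      rw [length_eq_dist_of_subwalk hp hq, dist_eq_one_iff_adj.2 hab]
    rwa [eq_of_length_le_one hq1.le hab.length_toWalk.le] at hq
  rw [← isSubwalk_toWalk_iff_mem_edges hxy]
  rcases exists_isSubwalk_of_mem_support hx hy with ⟨q, hq⟩ | ⟨q, hq⟩
  · exact .inl (subwalk_eq_toWalk q hq hxy)
  · exact .inr (subwalk_eq_toWalk q hq hxy.symm)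

theorem IsChordless.map {u v : V} {p : G.Walk u v} (hp : p.IsChordless) (f : G ↪g G') :
    (p.map f.toHom).IsChordless := by
  refine isChordless_iff_forall_mem_edges.2 fun x y hx hy hxy => ?_
  simp only [support_map, List.mem_map] at hx hy
  obtain ⟨x, hx, rfl⟩ := hx
  obtain ⟨y, hy, rfl⟩ := hy
  rw [edges_map]
  exact List.mem_map_of_mem (hp.mem_edges hx hy (f.map_adj_iff.1 hxy))

theorem IsChordless.mem_edges_or_of_adj {u v : V} {P : G.Walk u v} (hPc : P.IsChordless)
    {A : List V} (hA : ∀ x ∈ walkInterior P, ∀ a ∈ A, ¬ G.Adj a x) {x y : V}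
    (hx : x ∈ P.support ∨ x ∈ A) (hy : y ∈ P.support ∨ y ∈ A) (hxy : G.Adj x y) :
    s(x, y) ∈ P.edges ∨ (x ∈ u :: v :: A ∧ y ∈ u :: v :: A) := by
  have hends {z : V} (hz : z ∈ P.support ∨ z ∈ A) (hzi : z ∉ walkInterior P) :
      z ∈ u :: v :: A := by
    simp only [walkInterior, Set.mem_ofPred_eq, not_and, not_not] at hzi
    simp only [List.mem_cons]
    tauto
  by_cases hxi : x ∈ walkInterior P
  · rcases hy with hy | hy
    · exact .inl (hPc.mem_edges hxi.1 hy hxy)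
    · exact absurd hxy.symm (hA x hxi y hy)
  by_cases hyi : y ∈ walkInterior P
  · rcases hx with hx | hx
    · exact .inl (hPc.mem_edges hx hyi.1 hxy)
    · exact absurd hxy (hA y hyi x hx)
  exact .inr ⟨hends hx hxi, hends hy hyi⟩

variable {s : Set V}

@[simp] lemma length_induce {u v : V} :
    ∀ (w : G.Walk u v) (hw), (w.induce s hw).length = w.length
  | .nil, _ => rfl
  | .cons _ w, _ => by simp [length_induce w]

lemma map_edges_induce {u v : V} : ∀ (w : G.Walk u v) (hw),
    (w.induce s hw).edges.map (Sym2.map Subtype.val) = w.edges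
  | .nil, _ => rfl
  | .cons _ w, _ => by simp [map_edges_induce w]

lemma mem_support_induce {u v : V} (w : G.Walk u v) (hw : ∀ x ∈ w.support, x ∈ s) {x : s} :
    x ∈ (w.induce s hw).support ↔ (x : V) ∈ w.support := by
  simp [support_induce]

lemma mem_edges_induce {u v : V} (w : G.Walk u v) (hw : ∀ x ∈ w.support, x ∈ s) {x y : s} :
    s(x, y) ∈ (w.induce s hw).edges ↔ s((x : V), (y : V)) ∈ w.edges := by
  rw [← w.map_edges_induce hw]
  exact (List.mem_map_of_injective (Sym2.map.injective Subtype.val_injective)).symm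

lemma IsPath.induce {u v : V} {w : G.Walk u v} (hp : w.IsPath) (hw : ∀ x ∈ w.support, x ∈ s) :
    (w.induce s hw).IsPath :=
  IsPath.of_map (f := (Embedding.induce s).toHom) (by rwa [map_induce])

end Walk

theorem exists_isChordless_path_of_reachable_induce {s : Set V} {u v : V} (hu : u ∈ s)
    (hv : v ∈ s) (h : (G.induce s).Reachable ⟨u, hu⟩ ⟨v, hv⟩) :
    ∃ p : G.Walk u v, p.IsPath ∧ p.IsChordless ∧ ∀ x ∈ p.support, x ∈ s := by
  obtain ⟨q, hq, hqdist⟩ := h.exists_path_of_dist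
  have hsupp : ∀ x ∈ (q.map (Embedding.induce s).toHom).support, x ∈ s := by
    intro x hx
    rw [Walk.support_map, List.mem_map] at hx
    obtain ⟨x, -, rfl⟩ := hx
    exact x.2
  exact ⟨_, hq.map Subtype.val_injective, (q.isChordless_of_length_eq_dist hqdist).map _, hsupp⟩

theorem exists_isChordless_path_of_adj_of_connected {C : Set V} (hC : (G.induce C).Connected)
    {a b u w : V} (hu : u ∈ C) (hw : w ∈ C) (hau : G.Adj a u) (hbw : G.Adj b w) :
    ∃ p : G.Walk a b, p.IsPath ∧ p.IsChordless ∧ ∀ x ∈ walkInterior p, x ∈ C := by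
  set S := {b, w} ∪ ({a, u} ∪ C)
  have hS : (G.induce S).Connected :=
    induce_union_connected (induce_pair_connected_of_adj hbw).preconnected
      (induce_union_connected (induce_pair_connected_of_adj hau).preconnected
        hC.preconnected ⟨u, by simp, hu⟩).preconnected ⟨w, by simp, by simp [hw]⟩
  obtain ⟨p, hp, hpc, hpS⟩ := exists_isChordless_path_of_reachable_induce (u := a) (v := b)
    (by simp [S]) (by simp [S]) (hS.preconnected _ _)
  refine ⟨p, hp, hpc, fun x ⟨hxp, hxa, hxb⟩ => ?_⟩
  have hxS := hpS x hxp
  simp only [S, Set.mem_union, Set.mem_insert_iff, Set.mem_singleton_iff, hxa, hxb,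
    false_or] at hxS
  rcases hxS with rfl | rfl | hxC
  exacts [hw, hu, hxC]

theorem isLongPrism_induce {a₁ a₂ a₃ b₁ b₂ b₃ : V}
    (P₁ : G.Walk a₁ b₁) (P₂ : G.Walk a₂ b₂) (P₃ : G.Walk a₃ b₃)
    (hP₁ : P₁.IsPath) (hP₂ : P₂.IsPath) (hP₃ : P₃.IsPath)
    (hl₁ : 1 ≤ P₁.length) (hl₂ : 1 ≤ P₂.length) (hl₃ : 1 ≤ P₃.length)
    (hlong : 2 ≤ P₁.length ∨ 2 ≤ P₂.length ∨ 2 ≤ P₃.length)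
    (h₁₂ : ∀ x ∈ P₁.support, x ∉ P₂.support) (h₁₃ : ∀ x ∈ P₁.support, x ∉ P₃.support)
    (h₂₃ : ∀ x ∈ P₂.support, x ∉ P₃.support)
    {T : Set V} (hT : T = {x | x ∈ P₁.support ∨ x ∈ P₂.support ∨ x ∈ P₃.support})
    (hadj : ∀ x ∈ T, ∀ y ∈ T, (G.Adj x y ↔ (s(x, y) ∈ P₁.edges ∨ s(x, y) ∈ P₂.edges ∨
      s(x, y) ∈ P₃.edges ∨ s(x, y) ∈ ({s(a₁, a₂), s(a₂, a₃), s(a₁, a₃), s(b₁, b₂), s(b₂, b₃),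
        s(b₁, b₃)} : Set (Sym2 V))))) :
    IsLongPrism (G.induce T) := by
  subst hT
  refine ⟨_, _, _, _, _, _, P₁.induce _ fun x hx => .inl hx,
    P₂.induce _ fun x hx => .inr (.inl hx), P₃.induce _ fun x hx => .inr (.inr hx),
    hP₁.induce _, hP₂.induce _, hP₃.induce _, ?_⟩
  simp only [Walk.length_induce, Walk.mem_support_induce, Walk.mem_edges_induce]
  refine ⟨hl₁, hl₂, hl₃, hlong, fun x => x.2, fun x => h₁₂ x, fun x => h₁₃ x, fun x => h₂₃ x,
    fun x y => ?_⟩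
  rw [comap_adj, Function.Embedding.coe_subtype, hadj x x.2 y y.2]
  simp [Subtype.ext_iff]

lemma coDomino_edges_subset_edgeSet {a₁ a₂ v₁ v₂ v₃ v₄ : V}
    (hadj : ∀ x ∈ [a₁, a₂, v₁, v₂, v₃, v₄], ∀ y ∈ [a₁, a₂, v₁, v₂, v₃, v₄],
      (G.Adj x y ↔ s(x, y) ∈ ({s(v₁, v₂), s(v₂, v₃), s(v₃, v₄), s(v₄, v₁),
        s(a₁, v₁), s(a₁, v₂), s(a₂, v₃), s(a₂, v₄)} : Set (Sym2 V)))) :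
    ({s(v₁, v₂), s(v₂, v₃), s(v₃, v₄), s(v₄, v₁), s(a₁, v₁), s(a₁, v₂), s(a₂, v₃), s(a₂, v₄)} :
      Set (Sym2 V)) ⊆ G.edgeSet := by
  intro e he
  simp only [Set.mem_insert_iff, Set.mem_singleton_iff] at he
  rcases he with rfl | rfl | rfl | rfl | rfl | rfl | rfl | rfl <;>
    exact (hadj _ (by simp) _ (by simp)).2 (by simp)

lemma mem_coDomino_edges_iff {a₁ a₂ v₁ v₂ v₃ v₄ : V} (e : Sym2 V) :
    e ∈ ({s(v₁, v₂), s(v₂, v₃), s(v₃, v₄), s(v₄, v₁), s(a₁, v₁), s(a₁, v₂), s(a₂, v₃),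
      s(a₂, v₄)} : Set (Sym2 V)) ↔ e ∈ [s(v₁, v₄)] ∨ e ∈ [s(v₂, v₃)] ∨
      e ∈ ({s(a₁, v₁), s(v₁, v₂), s(a₁, v₂), s(a₂, v₄), s(v₄, v₃), s(a₂, v₃)} : Set (Sym2 V)) := by
  simp only [Set.mem_insert_iff, Set.mem_singleton_iff, List.mem_singleton]
  rw [Sym2.eq_swap (a := v₄) (b := v₃), Sym2.eq_swap (a := v₁) (b := v₄)]
  tauto

theorem exists_isLongPrism_of_coDomino_of_path {a₁ a₂ v₁ v₂ v₃ v₄ : V}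
    (hnodup : [a₁, a₂, v₁, v₂, v₃, v₄].Nodup)
    (hadj : ∀ x ∈ [a₁, a₂, v₁, v₂, v₃, v₄], ∀ y ∈ [a₁, a₂, v₁, v₂, v₃, v₄],
      (G.Adj x y ↔ s(x, y) ∈ ({s(v₁, v₂), s(v₂, v₃), s(v₃, v₄), s(v₄, v₁),
        s(a₁, v₁), s(a₁, v₂), s(a₂, v₃), s(a₂, v₄)} : Set (Sym2 V))))
    (P : G.Walk a₁ a₂) (hP : P.IsPath) (hPc : P.IsChordless)
    (hPsq : ∀ x ∈ walkInterior P, ∀ v ∈ [v₁, v₂, v₃, v₄], ¬ G.Adj v x) :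
    ∃ T : Set V, IsLongPrism (G.induce T) := by
  have hE := coDomino_edges_subset_edgeSet hadj
  simp only [List.nodup_cons, List.mem_cons, List.not_mem_nil, or_false, List.nodup_nil,
    and_true, not_or] at hnodup
  obtain ⟨⟨ha, ha₁v₁, ha₁v₂, ha₁v₃, ha₁v₄⟩, ⟨ha₂v₁, ha₂v₂, ha₂v₃, ha₂v₄⟩,
    ⟨hv₁₂, hv₁₃, -⟩, ⟨-, hv₂₄⟩, hv₃₄, -⟩ := hnodup
  have e12 : G.Adj v₁ v₂ := hE (Set.mem_insert _ _)
  have e14 : G.Adj v₁ v₄ := hE (show s(v₁, v₄) ∈ _ by rw [Sym2.eq_swap]; simp)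
  have e23 : G.Adj v₂ v₃ := hE (show s(v₂, v₃) ∈ _ by simp)
  have hna : ¬ G.Adj a₁ a₂ := by
    rw [hadj a₁ (by simp) a₂ (by simp)]
    simp [*, Ne.symm]
  have hlen : 2 ≤ P.length := by
    have h0 : P.length ≠ 0 := fun h => ha (Walk.eq_of_length_eq_zero h)
    have h1 : P.length ≠ 1 := fun h => hna (Walk.adj_of_length_eq_one h)
    omega
  have hv₁P : v₁ ∉ P.support := fun h =>
    hPsq v₁ ⟨h, Ne.symm ha₁v₁, Ne.symm ha₂v₁⟩ v₂ (by simp) e12.symm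
  have hv₄P : v₄ ∉ P.support := fun h =>
    hPsq v₄ ⟨h, Ne.symm ha₁v₄, Ne.symm ha₂v₄⟩ v₁ (by simp) e14
  have hv₂P : v₂ ∉ P.support := fun h =>
    hPsq v₂ ⟨h, Ne.symm ha₁v₂, Ne.symm ha₂v₂⟩ v₁ (by simp) e12
  have hv₃P : v₃ ∉ P.support := fun h =>
    hPsq v₃ ⟨h, Ne.symm ha₁v₃, Ne.symm ha₂v₃⟩ v₂ (by simp) e23
  have hsq {z : V} (hz : z ∈ P.support ∨ z ∈ e14.toWalk.support ∨ z ∈ e23.toWalk.support) :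
      z ∈ P.support ∨ z ∈ [v₁, v₂, v₃, v₄] := by
    simp only [Adj.support_toWalk, List.mem_cons, List.not_mem_nil, or_false] at hz ⊢
    tauto
  refine ⟨_, isLongPrism_induce P e14.toWalk e23.toWalk hP e14.isPath_toWalk e23.isPath_toWalk
    (by omega) (by simp) (by simp) (.inl hlen) ?_ ?_ ?_ rfl fun x hx y hy => ⟨fun h => ?_, ?_⟩⟩
  iterate 2
    intro x hx h
    rw [Adj.support_toWalk, List.mem_pair] at h
    rcases h with rfl | rfl <;> contradiction
  · simp [hv₁₂, hv₁₃, Ne.symm hv₂₄, Ne.symm hv₃₄]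
  · rcases hPc.mem_edges_or_of_adj hPsq (hsq hx) (hsq hy) h with hxy | ⟨hx6, hy6⟩
    · exact .inl hxy
    · exact .inr ((mem_coDomino_edges_iff s(x, y)).1 ((hadj x hx6 y hy6).1 h))
  · rintro (h | h)
    · exact P.adj_of_mem_edges h
    · exact hE ((mem_coDomino_edges_iff s(x, y)).2 h)

end SimpleGraph

open SimpleGraph in
theorem stmt18_general {V : Type u} (G : SimpleGraph V)
    (a₁ a₂ v₁ v₂ v₃ v₄ : V)
    (hnodup : [a₁, a₂, v₁, v₂, v₃, v₄].Nodup)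
    (hadj : ∀ x ∈ [a₁, a₂, v₁, v₂, v₃, v₄], ∀ y ∈ [a₁, a₂, v₁, v₂, v₃, v₄],
      (G.Adj x y ↔ s(x, y) ∈ ({s(v₁, v₂), s(v₂, v₃), s(v₃, v₄), s(v₄, v₁),
        s(a₁, v₁), s(a₁, v₂), s(a₂, v₃), s(a₂, v₄)} : Set (Sym2 V))))
    (C : Set V)
    (hCav : ∀ u ∈ C, ¬ G.Adj v₁ u ∧ ¬ G.Adj v₂ u ∧ ¬ G.Adj v₃ u ∧ ¬ G.Adj v₄ u)
    (hCconn : (G.induce C).Connected)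
    (h1 : ∃ u ∈ C, G.Adj a₁ u) (h2 : ∃ u ∈ C, G.Adj a₂ u) :
    ∃ T : Set V, IsLongPrism (G.induce T) := by
  obtain ⟨u₁, hu₁, ha₁u₁⟩ := h1
  obtain ⟨u₂, hu₂, ha₂u₂⟩ := h2
  obtain ⟨P, hP, hPc, hPC⟩ := exists_isChordless_path_of_adj_of_connected hCconn hu₁ hu₂ ha₁u₁ ha₂u₂
  exact exists_isLongPrism_of_coDomino_of_path hnodup hadj P hP hPc fun x hx => by
    simpa using hCav x (hPC x hx)

/-- Step 1 of the long-prism detection algorithm: an induced co-domino plus a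
component of `G − (N(v₁) ∪ N(v₂) ∪ N(v₃) ∪ N(v₄))` containing neighbors of both
`a₁` and `a₂` yields an induced long prism. -/
theorem stmt18 {V : Type u} [Fintype V] (G : SimpleGraph V)
    (a₁ a₂ v₁ v₂ v₃ v₄ : V)
    (hnodup : [a₁, a₂, v₁, v₂, v₃, v₄].Nodup)
    (hadj : ∀ x ∈ [a₁, a₂, v₁, v₂, v₃, v₄], ∀ y ∈ [a₁, a₂, v₁, v₂, v₃, v₄],
      (G.Adj x y ↔ s(x, y) ∈ ({s(v₁, v₂), s(v₂, v₃), s(v₃, v₄), s(v₄, v₁),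
        s(a₁, v₁), s(a₁, v₂), s(a₂, v₃), s(a₂, v₄)} : Set (Sym2 V))))
    (C : Set V)
    (hCav : ∀ u ∈ C, ¬ G.Adj v₁ u ∧ ¬ G.Adj v₂ u ∧ ¬ G.Adj v₃ u ∧ ¬ G.Adj v₄ u)
    (hCconn : (G.induce C).Connected)
    (hCmax : ∀ u ∈ C, ∀ w : V, w ∉ C →
      (¬ G.Adj v₁ w ∧ ¬ G.Adj v₂ w ∧ ¬ G.Adj v₃ w ∧ ¬ G.Adj v₄ w) → ¬ G.Adj u w)
    (h1 : ∃ u ∈ C, G.Adj a₁ u) (h2 : ∃ u ∈ C, G.Adj a₂ u) :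
    ∃ T : Set V, IsLongPrism (G.induce T) :=
  stmt18_general G a₁ a₂ v₁ v₂ v₃ v₄ hnodup hadj C hCav hCconn h1 h2
end

section
/- Let G be a pyramid-free graph containing an induced subgraph isomorphic to a net with vertices a1, a2, a3, v1, v2, v3 (triangle v1v2v3 and pendant edges a1v1, a2v2, a3v3). If some connected component of G minus (N(v1) ∪ N(v2) ∪ N(v3)) contains a neighbor of each of a1, a2, and a3, then G contains a long prism as an induced subgraph. -/
open SimpleGraph

universe u v

/-!
Join `a₁` to `a₂` by a chordless path `P` through `C`. Starting with `v₃ a₃` and continuing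
through `C` towards `P`, take a chordless path `R` from `v₃` to the first vertex `x` that has a
neighbour on `P`. Then no other vertex of `R` sees `P`, `v₁` sees `P ∪ R` only in `a₁` and `v₃`,
and `v₂` only in `a₂` and `v₃`. Let `u` and `w` be the first and the last neighbour of `x` on `P`.
If `u = w`, the paths `u … a₁ v₁`, `u … a₂ v₂` and `u x … v₃` form a pyramid with apex `u`.
If `uw` is an edge, the paths `u … v₁`, `w … v₂` and `x … v₃` form a prism on the triangles `uwx`
and `v₁v₂v₃`; it is long, since `R` is a single edge only when `x = a₃`, and then `u ≠ a₁`
because `a₁a₃` is not an edge. Otherwise `x u … v₁`, `x w … v₂` and `x … v₃` form a pyramid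
with apex `x`. Pyramid-freeness leaves the prism.
-/

namespace SimpleGraph.Walk

variable {V : Type*} {G : SimpleGraph V} {a b u v w x y z : V}

theorem IsPath.eq_of_mem_support_append {p : G.Walk u v} {q : G.Walk v w}
    (h : (p.append q).IsPath) (hp : x ∈ p.support) (hq : x ∈ q.support) : x = v :=
  by_contra fun hne => h.ne_of_mem_support_of_append hne hp hq rfl

theorem IsPath.ne_of_one_le_length {p : G.Walk u w} (hp : p.IsPath) (h : 1 ≤ p.length) : u ≠ w := by
  rintro rfl
  rw [isPath_iff_nil, ← length_eq_zero_iff] at hp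
  omega

theorem IsPath.notMem_of_append_append {A : G.Walk a u} {M : G.Walk u w} {B : G.Walk w b}
    (h : (A.append (M.append B)).IsPath) (huw : u ≠ w) (hA : y ∈ A.support) : y ∉ B.support := by
  intro hB
  have hyu := h.eq_of_mem_support_append hA (M.support_subset_support_append_right B hB)
  rw [append_assoc] at h
  exact huw (hyu ▸ h.eq_of_mem_support_append (A.support_subset_support_append_left M hA) hB)

theorem isChordless_nil : (nil : G.Walk u u).IsChordless := by
  rw [isChordless_iff_forall_mem_edges]
  intro y z hy hz hyz
  simp only [support_nil, List.mem_singleton] at hy hz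
  exact absurd (hy.trans hz.symm) hyz.ne

theorem IsChordless.reverse {p : G.Walk u v} (h : p.IsChordless) : p.reverse.IsChordless := by
  rw [isChordless_iff_forall_mem_edges] at h ⊢
  simp only [support_reverse, edges_reverse, List.mem_reverse]
  exact h

@[simp]
theorem isChordless_reverse {p : G.Walk u v} : p.reverse.IsChordless ↔ p.IsChordless :=
  ⟨fun h => p.reverse_reverse ▸ h.reverse, IsChordless.reverse⟩

theorem IsChordless.of_append_left {p : G.Walk u v} {q : G.Walk v w} (hpq : (p.append q).IsPath)
    (h : (p.append q).IsChordless) : p.IsChordless := by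
  rw [isChordless_iff_forall_mem_edges] at h ⊢
  intro y z hy hz hyz
  have hy' := p.support_subset_support_append_left q hy
  have hz' := p.support_subset_support_append_left q hz
  rcases List.mem_append.mp (edges_append p q ▸ h hy' hz' hyz) with he | he
  · exact he
  · have := (hpq.eq_of_mem_support_append hy (q.fst_mem_support_of_mem_edges he)).trans
      (hpq.eq_of_mem_support_append hz (q.snd_mem_support_of_mem_edges he)).symm
    exact absurd this hyz.ne

theorem IsChordless.of_append_right {p : G.Walk u v} {q : G.Walk v w} (hpq : (p.append q).IsPath)
    (h : (p.append q).IsChordless) : q.IsChordless := by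
  rw [← isChordless_reverse] at h ⊢
  rw [← isPath_reverse_iff, reverse_append] at hpq
  rw [reverse_append] at h
  exact h.of_append_left hpq

theorem IsChordless.cons {p : G.Walk u v} (h : p.IsChordless) (hwu : G.Adj w u)
    (hw : ∀ y ∈ p.support, G.Adj w y → y = u) : (cons hwu p).IsChordless := by
  rw [isChordless_iff_forall_mem_edges] at h ⊢
  simp only [support_cons, edges_cons, List.mem_cons]
  rintro y z (rfl | hy) (rfl | hz) hyz
  · exact absurd rfl hyz.ne
  · exact Or.inl (by rw [hw z hz hyz])
  · exact Or.inl (by rw [hw y hy hyz.symm, Sym2.eq_swap])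
  · exact Or.inr (h hy hz hyz)

theorem IsChordless.eq_or_eq_of_adj_append {p : G.Walk u v} {q : G.Walk v w}
    (hpq : (p.append q).IsPath) (h : (p.append q).IsChordless) (hy : y ∈ p.support)
    (hz : z ∈ q.support) (hyz : G.Adj y z) : y = v ∨ z = v := by
  have hy' := p.support_subset_support_append_left q hy
  have hz' := p.support_subset_support_append_right q hz
  rcases List.mem_append.mp (edges_append p q ▸ h.mem_edges hy' hz' hyz) with he | he
  · exact Or.inr (hpq.eq_of_mem_support_append (p.snd_mem_support_of_mem_edges he) hz)
  · exact Or.inl (hpq.eq_of_mem_support_append hy (q.fst_mem_support_of_mem_edges he))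

theorem IsChordless.eq_and_eq_of_adj_append_append {A : G.Walk a u} {M : G.Walk u w}
    {B : G.Walk w b} (hp : (A.append (M.append B)).IsPath)
    (hc : (A.append (M.append B)).IsChordless) (huw : u ≠ w) (hy : y ∈ A.support)
    (hz : z ∈ B.support) (hyz : G.Adj y z) : y = u ∧ z = w := by
  have hdisj {t : V} := hp.notMem_of_append_append (y := t) huw
  have h₁ := hc.eq_or_eq_of_adj_append hp hy (M.support_subset_support_append_right B hz) hyz
  rw [append_assoc] at hp hc
  have h₂ := hc.eq_or_eq_of_adj_append hp (A.support_subset_support_append_left M hy) hz hyz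
  refine ⟨h₁.resolve_right ?_, h₂.resolve_left ?_⟩
  · rintro rfl
    exact hdisj A.end_mem_support hz
  · rintro rfl
    exact hdisj hy B.start_mem_support

theorem exists_eq_append_first_mem (p : G.Walk u v) (S : Set V) (h : ∃ x ∈ p.support, x ∈ S) :
    ∃ x ∈ S, ∃ (q : G.Walk u x) (r : G.Walk x v),
      p = q.append r ∧ ∀ y ∈ q.support, y ∈ S → y = x := by
  induction p with
  | nil =>
    obtain ⟨x, hx, hxS⟩ := h
    rw [support_nil, List.mem_singleton] at hx
    subst hx
    exact ⟨_, hxS, nil, nil, rfl, fun y hy _ => by simpa using hy⟩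
  | @cons u u' v huu' p ih =>
    by_cases hu : u ∈ S
    · exact ⟨u, hu, nil, cons huu' p, rfl, fun y hy _ => by simpa using hy⟩
    · obtain ⟨x, hx, hxS⟩ := h
      rw [support_cons, List.mem_cons] at hx
      obtain ⟨x', hx'S, q, r, rfl, hq⟩ :=
        ih ⟨x, hx.resolve_left (by rintro rfl; exact hu hxS), hxS⟩
      refine ⟨x', hx'S, cons huu' q, r, rfl, ?_⟩
      rintro y hy hyS
      rw [support_cons, List.mem_cons] at hy
      rcases hy with rfl | hy
      · exact absurd hyS hu
      · exact hq y hy hyS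

theorem exists_eq_append_last_mem (p : G.Walk u v) (S : Set V) (h : ∃ x ∈ p.support, x ∈ S) :
    ∃ x ∈ S, ∃ (q : G.Walk u x) (r : G.Walk x v),
      p = q.append r ∧ ∀ y ∈ r.support, y ∈ S → y = x := by
  obtain ⟨x, hxS, q, r, hp, hq⟩ :=
    p.reverse.exists_eq_append_first_mem S (by simpa only [support_reverse, List.mem_reverse])
  refine ⟨x, hxS, r.reverse, q.reverse, ?_, fun y hy => hq y (by simpa using hy)⟩
  rw [← reverse_append, ← hp, reverse_reverse]

theorem exists_walk_to_adj_of_start_notMem (p : G.Walk u v) {S : Set V} (hu : u ∉ S) (hv : v ∈ S) :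
    ∃ x y, y ∈ S ∧ G.Adj x y ∧ ∃ q : G.Walk u x,
      ∀ z ∈ q.support, z ∉ S ∧ z ∈ p.support := by
  induction p with
  | nil => exact absurd hv hu
  | @cons u u' v huu' p ih =>
    by_cases hu' : u' ∈ S
    · exact ⟨u, u', hu', huu', nil, fun z hz => by simp_all⟩
    · obtain ⟨x, y, hyS, hxy, q, hq⟩ := ih hu' hv
      refine ⟨x, y, hyS, hxy, cons huu' q, fun z hz => ?_⟩
      rw [support_cons, List.mem_cons] at hz
      rcases hz with rfl | hz
      · simp_all
      · exact ⟨(hq z hz).1, by simp [(hq z hz).2]⟩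

theorem exists_isPath_isChordless (p : G.Walk u v) :
    ∃ q : G.Walk u v, q.IsPath ∧ q.IsChordless ∧ ∀ x ∈ q.support, x ∈ p.support := by
  induction p with
  | nil => exact ⟨nil, .nil, isChordless_nil, fun _ => id⟩
  | @cons u u' v huu' p ih =>
    obtain ⟨q, hqp, hqc, hqs⟩ := ih
    obtain ⟨x, hx, q₁, q₂, rfl, hq₂⟩ := q.exists_eq_append_last_mem {y | y = u ∨ G.Adj u y}
      ⟨u', q.start_mem_support, Or.inr huu'⟩
    have hsub : ∀ y ∈ q₂.support, y ∈ (cons huu' p).support := fun y hy =>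
      List.mem_cons_of_mem _ (hqs y (q₁.support_subset_support_append_right q₂ hy))
    rcases hx with rfl | hux
    · exact ⟨q₂, hqp.of_append_right, hqc.of_append_right hqp, hsub⟩
    · refine ⟨cons hux q₂, ?_, ?_, ?_⟩
      · exact hqp.of_append_right.cons fun hu => hux.ne (hq₂ u hu (Or.inl rfl))
      · exact (hqc.of_append_right hqp).cons hux fun y hy huy => hq₂ y hy (Or.inr huy)
      · simpa using hsub

theorem exists_isPath_isChordless_to_adj (p : G.Walk u v) {D : Set V} (hu : u ∉ D) (hv : v ∈ D) :
    ∃ x, (∃ y ∈ D, G.Adj x y) ∧ ∃ Q : G.Walk u x, Q.IsPath ∧ Q.IsChordless ∧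
      ∀ z ∈ Q.support, z ∈ p.support ∧ z ∉ D ∧ ∀ y ∈ D, G.Adj z y → z = x := by
  obtain ⟨z, y, hy, hzy, q, hq⟩ := p.exists_walk_to_adj_of_start_notMem hu hv
  obtain ⟨x, hx, q₁, q₂, rfl, hq₁⟩ := q.exists_eq_append_first_mem {v | ∃ y ∈ D, G.Adj v y}
    ⟨z, q.end_mem_support, y, hy, hzy⟩
  obtain ⟨Q, hQ, hQc, hQs⟩ := q₁.exists_isPath_isChordless
  refine ⟨x, hx, Q, hQ, hQc, fun t ht => ?_⟩
  have ht₁ := hQs t ht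
  have ht := hq t (q₁.support_subset_support_append_left q₂ ht₁)
  exact ⟨ht.2, ht.1, fun y hy h => hq₁ t ht₁ ⟨y, hy, h⟩⟩

section Induce

variable {s : Set V}

theorem mem_support_induce_iff (p : G.Walk u v) (hp : ∀ x ∈ p.support, x ∈ s) {x : s} :
    x ∈ (p.induce s hp).support ↔ (x : V) ∈ p.support := by
  rw [support_induce, List.mem_attachWith]

theorem mem_edges_induce_iff (p : G.Walk u v) (hp : ∀ x ∈ p.support, x ∈ s) {x y : s} :
    s(x, y) ∈ (p.induce s hp).edges ↔ s((x : V), y) ∈ p.edges := by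
  induction p with
  | nil => simp
  | cons h p ih => simp [ih, Subtype.ext_iff]

theorem length_induce_s19 (p : G.Walk u v) (hp : ∀ x ∈ p.support, x ∈ s) :
    (p.induce s hp).length = p.length := by
  induction p with
  | nil => rfl
  | cons h p ih => simp [ih]

theorem isPath_induce_iff (p : G.Walk u v) (hp : ∀ x ∈ p.support, x ∈ s) :
    (p.induce s hp).IsPath ↔ p.IsPath := by
  conv_rhs => rw [← p.map_induce hp]
  exact (isPath_map_iff_of_injective Subtype.val_injective).symm

end Induce

end SimpleGraph.Walk

open Walk

theorem SimpleGraph.Connected.exists_walk_of_adj_of_adj {V : Type*} {G : SimpleGraph V}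
    {C : Set V} (h : (G.induce C).Connected) {a b c c' : V} (hc : c ∈ C) (hc' : c' ∈ C)
    (hac : G.Adj a c) (hbc : G.Adj b c') :
    ∃ p : G.Walk a b, ∀ y ∈ p.support, y = a ∨ y = b ∨ y ∈ C := by
  obtain ⟨q⟩ := h.preconnected ⟨c, hc⟩ ⟨c', hc'⟩
  have hq {d d' : C} (q : (G.induce C).Walk d d') :
      ∀ y ∈ (q.map (Embedding.induce C).toHom).support, y ∈ C := by
    simp only [Walk.support_map, List.mem_map]
    rintro _ ⟨y, -, rfl⟩
    exact y.2
  obtain ⟨p, hp⟩ : ∃ p : G.Walk c c', ∀ y ∈ p.support, y ∈ C := ⟨_, hq q⟩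
  refine ⟨.cons hac (p.concat hbc.symm), fun y hy => ?_⟩
  simp only [support_cons, support_concat, List.mem_cons, List.mem_append,
    List.not_mem_nil, or_false] at hy
  rcases hy with h | h | h
  exacts [Or.inl h, Or.inr (Or.inr (hp y h)), Or.inr (Or.inl h)]

section InducedShapes

variable {V : Type*} {G : SimpleGraph V}

theorem adj_iff_of_isChordless_of_cross {a₁ b₁ a₂ b₂ a₃ b₃ y z : V} {W₁ : G.Walk a₁ b₁}
    {W₂ : G.Walk a₂ b₂} {W₃ : G.Walk a₃ b₃} {E : Set (Sym2 V)} (hE : E ⊆ G.edgeSet)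
    (hc₁ : W₁.IsChordless) (hc₂ : W₂.IsChordless) (hc₃ : W₃.IsChordless)
    (h₁₂ : ∀ y ∈ W₁.support, ∀ z ∈ W₂.support, G.Adj y z →
      s(y, z) ∈ W₁.edges ∨ s(y, z) ∈ W₂.edges ∨ s(y, z) ∈ E)
    (h₁₃ : ∀ y ∈ W₁.support, ∀ z ∈ W₃.support, G.Adj y z →
      s(y, z) ∈ W₁.edges ∨ s(y, z) ∈ W₃.edges ∨ s(y, z) ∈ E)
    (h₂₃ : ∀ y ∈ W₂.support, ∀ z ∈ W₃.support, G.Adj y z →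
      s(y, z) ∈ W₂.edges ∨ s(y, z) ∈ W₃.edges ∨ s(y, z) ∈ E)
    (hy : y ∈ W₁.support ∨ y ∈ W₂.support ∨ y ∈ W₃.support)
    (hz : z ∈ W₁.support ∨ z ∈ W₂.support ∨ z ∈ W₃.support) :
    G.Adj y z ↔ s(y, z) ∈ W₁.edges ∨ s(y, z) ∈ W₂.edges ∨ s(y, z) ∈ W₃.edges ∨ s(y, z) ∈ E := by
  refine ⟨fun hyz => ?_, ?_⟩
  · rcases hy with hy | hy | hy <;> rcases hz with hz | hz | hz
    · exact Or.inl (hc₁.mem_edges hy hz hyz)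
    · have := h₁₂ y hy z hz hyz; tauto
    · have := h₁₃ y hy z hz hyz; tauto
    · have := h₁₂ z hz y hy hyz.symm; rw [Sym2.eq_swap] at this; tauto
    · exact Or.inr (Or.inl (hc₂.mem_edges hy hz hyz))
    · have := h₂₃ y hy z hz hyz; tauto
    · have := h₁₃ z hz y hy hyz.symm; rw [Sym2.eq_swap] at this; tauto
    · have := h₂₃ z hz y hy hyz.symm; rw [Sym2.eq_swap] at this; tauto
    · exact Or.inr (Or.inr (Or.inl (hc₃.mem_edges hy hz hyz)))
  · rintro (h | h | h | h)
    · exact W₁.adj_of_mem_edges h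
    · exact W₂.adj_of_mem_edges h
    · exact W₃.adj_of_mem_edges h
    · exact hE h

theorem mem_edges_of_adj_of_apex {a b b' : V} {W : G.Walk a b} {W' : G.Walk a b'} {E : Set (Sym2 V)}
    (hc : W.IsChordless) (hc' : W'.IsChordless) (hE : s(b, b') ∈ E)
    (h : ∀ y ∈ W.support, ∀ z ∈ W'.support, G.Adj y z → y = a ∨ z = a ∨ (y = b ∧ z = b'))
    (y : V) (hy : y ∈ W.support) (z : V) (hz : z ∈ W'.support) (hyz : G.Adj y z) :
    s(y, z) ∈ W.edges ∨ s(y, z) ∈ W'.edges ∨ s(y, z) ∈ E := by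
  rcases h y hy z hz hyz with rfl | rfl | ⟨rfl, rfl⟩
  · exact Or.inr (Or.inl (hc'.mem_edges W'.start_mem_support hz hyz))
  · exact Or.inl (hc.mem_edges hy W.start_mem_support hyz)
  · exact Or.inr (Or.inr hE)

theorem isPyramid_induce_of_isChordless {a b₁ b₂ b₃ : V} {W₁ : G.Walk a b₁} {W₂ : G.Walk a b₂}
    {W₃ : G.Walk a b₃} (hp₁ : W₁.IsPath) (hp₂ : W₂.IsPath) (hp₃ : W₃.IsPath)
    (hc₁ : W₁.IsChordless) (hc₂ : W₂.IsChordless) (hc₃ : W₃.IsChordless)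
    (hl₁ : 1 ≤ W₁.length) (hl₂ : 1 ≤ W₂.length) (hl₃ : 1 ≤ W₃.length)
    (hlong : (2 ≤ W₁.length ∧ 2 ≤ W₂.length) ∨ (2 ≤ W₁.length ∧ 2 ≤ W₃.length) ∨
      (2 ≤ W₂.length ∧ 2 ≤ W₃.length))
    (h₁₂ : ∀ x ∈ W₁.support, x ∈ W₂.support → x = a)
    (h₁₃ : ∀ x ∈ W₁.support, x ∈ W₃.support → x = a)
    (h₂₃ : ∀ x ∈ W₂.support, x ∈ W₃.support → x = a)
    (hb₁₂ : G.Adj b₁ b₂) (hb₂₃ : G.Adj b₂ b₃) (hb₁₃ : G.Adj b₁ b₃)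
    (hx₁₂ : ∀ y ∈ W₁.support, ∀ z ∈ W₂.support, G.Adj y z → y = a ∨ z = a ∨ (y = b₁ ∧ z = b₂))
    (hx₁₃ : ∀ y ∈ W₁.support, ∀ z ∈ W₃.support, G.Adj y z → y = a ∨ z = a ∨ (y = b₁ ∧ z = b₃))
    (hx₂₃ : ∀ y ∈ W₂.support, ∀ z ∈ W₃.support, G.Adj y z → y = a ∨ z = a ∨ (y = b₂ ∧ z = b₃)) :
    IsPyramid (G.induce {v | v ∈ W₁.support ∨ v ∈ W₂.support ∨ v ∈ W₃.support}) := by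
  set T : Set V := {v | v ∈ W₁.support ∨ v ∈ W₂.support ∨ v ∈ W₃.support}
  have hT₁ : ∀ v ∈ W₁.support, v ∈ T := fun v hv => Or.inl hv
  have hT₂ : ∀ v ∈ W₂.support, v ∈ T := fun v hv => Or.inr (Or.inl hv)
  have hT₃ : ∀ v ∈ W₃.support, v ∈ T := fun v hv => Or.inr (Or.inr hv)
  have hE : {s(b₁, b₂), s(b₂, b₃), s(b₁, b₃)} ⊆ G.edgeSet := by
    simp [Set.insert_subset_iff, hb₁₂, hb₂₃, hb₁₃]
  refine ⟨_, _, _, _, W₁.induce T hT₁, W₂.induce T hT₂, W₃.induce T hT₃, ?_⟩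
  simp only [isPath_induce_iff, length_induce_s19, mem_support_induce_iff, mem_edges_induce_iff,
    induce_adj, Subtype.forall, Subtype.ext_iff]
  refine ⟨hp₁, hp₂, hp₃, hl₁, hl₂, hl₃, hlong, fun _ => id, fun x _ => h₁₂ x, fun x _ => h₁₃ x,
    fun x _ => h₂₃ x, fun y hy z hz => ?_⟩
  have := adj_iff_of_isChordless_of_cross hE hc₁ hc₂ hc₃
    (mem_edges_of_adj_of_apex hc₁ hc₂ (by simp) hx₁₂)
    (mem_edges_of_adj_of_apex hc₁ hc₃ (by simp) hx₁₃)
    (mem_edges_of_adj_of_apex hc₂ hc₃ (by simp) hx₂₃) hy hz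
  simpa [Sym2.eq_iff] using this

theorem isLongPrism_induce_of_isChordless {t₁ t₂ t₃ b₁ b₂ b₃ : V} {W₁ : G.Walk t₁ b₁}
    {W₂ : G.Walk t₂ b₂} {W₃ : G.Walk t₃ b₃} (hp₁ : W₁.IsPath) (hp₂ : W₂.IsPath) (hp₃ : W₃.IsPath)
    (hc₁ : W₁.IsChordless) (hc₂ : W₂.IsChordless) (hc₃ : W₃.IsChordless)
    (hl₁ : 1 ≤ W₁.length) (hl₂ : 1 ≤ W₂.length) (hl₃ : 1 ≤ W₃.length)
    (hlong : 2 ≤ W₁.length ∨ 2 ≤ W₂.length ∨ 2 ≤ W₃.length)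
    (h₁₂ : ∀ x ∈ W₁.support, x ∉ W₂.support) (h₁₃ : ∀ x ∈ W₁.support, x ∉ W₃.support)
    (h₂₃ : ∀ x ∈ W₂.support, x ∉ W₃.support)
    (ht₁₂ : G.Adj t₁ t₂) (ht₂₃ : G.Adj t₂ t₃) (ht₁₃ : G.Adj t₁ t₃)
    (hb₁₂ : G.Adj b₁ b₂) (hb₂₃ : G.Adj b₂ b₃) (hb₁₃ : G.Adj b₁ b₃)
    (hx₁₂ : ∀ y ∈ W₁.support, ∀ z ∈ W₂.support, G.Adj y z →
      (y = t₁ ∧ z = t₂) ∨ (y = b₁ ∧ z = b₂))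
    (hx₁₃ : ∀ y ∈ W₁.support, ∀ z ∈ W₃.support, G.Adj y z →
      (y = t₁ ∧ z = t₃) ∨ (y = b₁ ∧ z = b₃))
    (hx₂₃ : ∀ y ∈ W₂.support, ∀ z ∈ W₃.support, G.Adj y z →
      (y = t₂ ∧ z = t₃) ∨ (y = b₂ ∧ z = b₃)) :
    IsLongPrism (G.induce {v | v ∈ W₁.support ∨ v ∈ W₂.support ∨ v ∈ W₃.support}) := by
  set T : Set V := {v | v ∈ W₁.support ∨ v ∈ W₂.support ∨ v ∈ W₃.support}
  have hT₁ : ∀ v ∈ W₁.support, v ∈ T := fun v hv => Or.inl hv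
  have hT₂ : ∀ v ∈ W₂.support, v ∈ T := fun v hv => Or.inr (Or.inl hv)
  have hT₃ : ∀ v ∈ W₃.support, v ∈ T := fun v hv => Or.inr (Or.inr hv)
  set E : Set (Sym2 V) := {s(t₁, t₂), s(t₂, t₃), s(t₁, t₃), s(b₁, b₂), s(b₂, b₃), s(b₁, b₃)}
  have hE : E ⊆ G.edgeSet := by
    simp [E, Set.insert_subset_iff, ht₁₂, ht₂₃, ht₁₃, hb₁₂, hb₂₃, hb₁₃]
  have cross {c c' d d' : V} {W : G.Walk c d} {W' : G.Walk c' d'} (hcd : s(c, c') ∈ E)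
      (hdd : s(d, d') ∈ E)
      (h : ∀ y ∈ W.support, ∀ z ∈ W'.support, G.Adj y z → (y = c ∧ z = c') ∨ (y = d ∧ z = d'))
      (y : V) (hy : y ∈ W.support) (z : V) (hz : z ∈ W'.support) (hyz : G.Adj y z) :
      s(y, z) ∈ W.edges ∨ s(y, z) ∈ W'.edges ∨ s(y, z) ∈ E := by
    rcases h y hy z hz hyz with ⟨rfl, rfl⟩ | ⟨rfl, rfl⟩ <;> tauto
  refine ⟨_, _, _, _, _, _, W₁.induce T hT₁, W₂.induce T hT₂, W₃.induce T hT₃, ?_⟩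
  simp only [isPath_induce_iff, length_induce_s19, mem_support_induce_iff, mem_edges_induce_iff,
    induce_adj, Subtype.forall]
  refine ⟨hp₁, hp₂, hp₃, hl₁, hl₂, hl₃, hlong, fun _ => id, fun x _ => h₁₂ x, fun x _ => h₁₃ x,
    fun x _ => h₂₃ x, fun y hy z hz => ?_⟩
  have := adj_iff_of_isChordless_of_cross hE hc₁ hc₂ hc₃
    (cross (by simp [E]) (by simp [E]) hx₁₂) (cross (by simp [E]) (by simp [E]) hx₁₃)
    (cross (by simp [E]) (by simp [E]) hx₂₃) hy hz
  simpa [E, Sym2.eq_iff, Subtype.ext_iff] using this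

end InducedShapes

section Legs

variable {V : Type*} {G : SimpleGraph V}

theorem exists_isPyramid_or_isLongPrism_of_legs {u w x v₁ v₂ v₃ : V} {W₁ : G.Walk u v₁}
    {W₂ : G.Walk w v₂} {W₃ : G.Walk x v₃} (hp₁ : W₁.IsPath) (hp₂ : W₂.IsPath) (hp₃ : W₃.IsPath)
    (hc₁ : W₁.IsChordless) (hc₂ : W₂.IsChordless) (hc₃ : W₃.IsChordless)
    (hl₁ : 1 ≤ W₁.length) (hl₂ : 1 ≤ W₂.length) (hl₃ : 1 ≤ W₃.length)
    (hlong : 2 ≤ W₁.length ∨ 2 ≤ W₂.length ∨ 2 ≤ W₃.length)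
    (h₁₂ : ∀ y ∈ W₁.support, y ∉ W₂.support) (h₁₃ : ∀ y ∈ W₁.support, y ∉ W₃.support)
    (h₂₃ : ∀ y ∈ W₂.support, y ∉ W₃.support)
    (hx₁₂ : ∀ y ∈ W₁.support, ∀ z ∈ W₂.support, G.Adj y z →
      (y = u ∧ z = w) ∨ (y = v₁ ∧ z = v₂))
    (hx₁₃ : ∀ y ∈ W₁.support, ∀ z ∈ W₃.support, G.Adj y z →
      (y = u ∧ z = x) ∨ (y = v₁ ∧ z = v₃))
    (hx₂₃ : ∀ y ∈ W₂.support, ∀ z ∈ W₃.support, G.Adj y z →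
      (y = w ∧ z = x) ∨ (y = v₂ ∧ z = v₃))
    (hxu : G.Adj x u) (hxw : G.Adj x w)
    (hv₁₂ : G.Adj v₁ v₂) (hv₂₃ : G.Adj v₂ v₃) (hv₁₃ : G.Adj v₁ v₃) :
    (∃ T : Set V, IsPyramid (G.induce T)) ∨ ∃ T : Set V, IsLongPrism (G.induce T) := by
  by_cases huw : G.Adj u w
  · exact Or.inr ⟨_, isLongPrism_induce_of_isChordless hp₁ hp₂ hp₃ hc₁ hc₂ hc₃ hl₁ hl₂ hl₃ hlong
      h₁₂ h₁₃ h₂₃ huw hxw.symm hxu.symm hv₁₂ hv₂₃ hv₁₃ hx₁₂ hx₁₃ hx₂₃⟩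
  have hx : x ∈ W₃.support := W₃.start_mem_support
  have hxv₃ := hp₃.ne_of_one_le_length hl₃
  have hx₁ : ∀ y ∈ W₁.support, G.Adj x y → y = u := fun y hy hxy => by
    rcases hx₁₃ y hy x hx hxy.symm with ⟨rfl, -⟩ | ⟨-, rfl⟩
    exacts [rfl, absurd rfl hxv₃]
  have hx₂ : ∀ y ∈ W₂.support, G.Adj x y → y = w := fun y hy hxy => by
    rcases hx₂₃ y hy x hx hxy.symm with ⟨rfl, -⟩ | ⟨-, rfl⟩
    exacts [rfl, absurd rfl hxv₃]
  refine Or.inl ⟨_, isPyramid_induce_of_isChordless (W₃ := W₃)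
    (hp₁.cons fun h => h₁₃ x h hx) (hp₂.cons fun h => h₂₃ x h hx) hp₃
    (hc₁.cons hxu hx₁) (hc₂.cons hxw hx₂) hc₃ (by simp) (by simp) hl₃
    (Or.inl ⟨by simp [hl₁], by simp [hl₂]⟩) ?_ ?_ ?_ hv₁₂ hv₂₃ hv₁₃ ?_ ?_ ?_⟩
  all_goals simp only [support_cons, List.mem_cons]
  · rintro y (h | hy₁) (h' | hy₂)
    exacts [h, h, h', absurd hy₂ (h₁₂ y hy₁)]
  · rintro y (rfl | hy₁) hy₃
    exacts [rfl, absurd hy₃ (h₁₃ y hy₁)]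
  · rintro y (rfl | hy₂) hy₃
    exacts [rfl, absurd hy₃ (h₂₃ y hy₂)]
  · rintro y (hy | hy) z (hz | hz) hyz
    · exact Or.inl hy
    · exact Or.inl hy
    · exact Or.inr (Or.inl hz)
    · rcases hx₁₂ y hy z hz hyz with ⟨rfl, rfl⟩ | h
      exacts [absurd hyz huw, Or.inr (Or.inr h)]
  · rintro y (rfl | hy) z hz hyz
    · exact Or.inl rfl
    · rcases hx₁₃ y hy z hz hyz with ⟨-, rfl⟩ | h
      exacts [Or.inr (Or.inl rfl), Or.inr (Or.inr h)]
  · rintro y (rfl | hy) z hz hyz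
    · exact Or.inl rfl
    · rcases hx₂₃ y hy z hz hyz with ⟨-, rfl⟩ | h
      exacts [Or.inr (Or.inl rfl), Or.inr (Or.inr h)]

theorem exists_isPyramid_of_legs {u x v₁ v₂ v₃ : V} {W₁ : G.Walk u v₁} {W₂ : G.Walk u v₂}
    {R : G.Walk x v₃} (hp₁ : W₁.IsPath) (hp₂ : W₂.IsPath) (hpR : R.IsPath)
    (hc₁ : W₁.IsChordless) (hc₂ : W₂.IsChordless) (hcR : R.IsChordless)
    (hl₁ : 1 ≤ W₁.length) (hl₂ : 1 ≤ W₂.length) (hlR : 1 ≤ R.length)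
    (hlong : 2 ≤ W₁.length ∨ 2 ≤ W₂.length)
    (h₁₂ : ∀ y ∈ W₁.support, y ∈ W₂.support → y = u) (h₁R : ∀ y ∈ W₁.support, y ∉ R.support)
    (h₂R : ∀ y ∈ W₂.support, y ∉ R.support)
    (hx₁₂ : ∀ y ∈ W₁.support, ∀ z ∈ W₂.support, G.Adj y z → y = u ∨ z = u ∨ (y = v₁ ∧ z = v₂))
    (hx₁R : ∀ y ∈ W₁.support, ∀ z ∈ R.support, G.Adj y z →
      (y = u ∧ z = x) ∨ (y = v₁ ∧ z = v₃))
    (hx₂R : ∀ y ∈ W₂.support, ∀ z ∈ R.support, G.Adj y z →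
      (y = u ∧ z = x) ∨ (y = v₂ ∧ z = v₃))
    (hux : G.Adj u x) (hv₁₂ : G.Adj v₁ v₂) (hv₂₃ : G.Adj v₂ v₃) (hv₁₃ : G.Adj v₁ v₃) :
    ∃ T : Set V, IsPyramid (G.induce T) := by
  have hu : u ∈ W₁.support := W₁.start_mem_support
  have huv₁ := hp₁.ne_of_one_le_length hl₁
  have hcross {v : V} {W : G.Walk u v} (hW : ∀ y ∈ W.support, ∀ z ∈ R.support, G.Adj y z →
      (y = u ∧ z = x) ∨ (y = v ∧ z = v₃)) :
      ∀ y ∈ W.support, ∀ z ∈ (cons hux R).support, G.Adj y z →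
        y = u ∨ z = u ∨ (y = v ∧ z = v₃) := by
    simp only [support_cons, List.mem_cons]
    rintro y hy z (rfl | hz) hyz
    · exact Or.inr (Or.inl rfl)
    · rcases hW y hy z hz hyz with ⟨rfl, -⟩ | h
      exacts [Or.inl rfl, Or.inr (Or.inr h)]
  refine ⟨_, isPyramid_induce_of_isChordless hp₁ hp₂ (hpR.cons fun h => h₁R u hu h) hc₁ hc₂
    (hcR.cons hux fun z hz huz => ?_) hl₁ hl₂ (by simp) ?_ h₁₂ ?_ ?_ hv₁₂ hv₂₃ hv₁₃ hx₁₂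
    (hcross hx₁R) (hcross hx₂R)⟩
  · rcases hx₁R u hu z hz huz with ⟨-, rfl⟩ | ⟨h, -⟩
    exacts [rfl, absurd h huv₁]
  · rcases hlong with h | h
    · exact Or.inr (Or.inl ⟨h, by simp [hlR]⟩)
    · exact Or.inr (Or.inr ⟨h, by simp [hlR]⟩)
  · simp only [support_cons, List.mem_cons]
    rintro y hy (rfl | hyR)
    exacts [rfl, absurd hyR (h₁R y hy)]
  · simp only [support_cons, List.mem_cons]
    rintro y hy (rfl | hyR)
    exacts [rfl, absurd hyR (h₂R y hy)]

end Legs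

section Linkage

variable {V : Type*} {G : SimpleGraph V} {a₁ a₂ u w x v₁ v₂ v₃ : V}

structure IsNetLinkage (P : G.Walk a₁ a₂) (R : G.Walk x v₃) (v₁ v₂ : V) : Prop where
  isPath_P : P.IsPath
  isChordless_P : P.IsChordless
  ne : a₁ ≠ a₂
  isPath_R : R.IsPath
  isChordless_R : R.IsChordless
  one_le_length_R : 1 ≤ R.length
  notMem_P_of_mem_R : ∀ y ∈ R.support, y ∉ P.support
  eq_of_adj_P : ∀ y ∈ R.support, ∀ z ∈ P.support, G.Adj y z → y = x
  adj_v₁_a₁ : G.Adj v₁ a₁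
  adj_v₂_a₂ : G.Adj v₂ a₂
  eq_a₁ : ∀ z ∈ P.support, G.Adj v₁ z → z = a₁
  eq_a₂ : ∀ z ∈ P.support, G.Adj v₂ z → z = a₂
  eq_v₃_of_adj_v₁ : ∀ y ∈ R.support, G.Adj v₁ y → y = v₃
  eq_v₃_of_adj_v₂ : ∀ y ∈ R.support, G.Adj v₂ y → y = v₃
  adj_v₁_v₂ : G.Adj v₁ v₂
  adj_v₁_v₃ : G.Adj v₁ v₃
  adj_v₂_v₃ : G.Adj v₂ v₃
  v₁_notMem_P : v₁ ∉ P.support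
  v₂_notMem_P : v₂ ∉ P.support
  v₁_notMem_R : v₁ ∉ R.support
  v₂_notMem_R : v₂ ∉ R.support

namespace IsNetLinkage

variable {P : G.Walk a₁ a₂} {R : G.Walk x v₃}

theorem symm (L : IsNetLinkage P R v₁ v₂) : IsNetLinkage P.reverse R v₂ v₁ := by
  refine ⟨L.isPath_P.reverse, L.isChordless_P.reverse, L.ne.symm, L.isPath_R, L.isChordless_R,
    L.one_le_length_R, ?_, ?_, L.adj_v₂_a₂, L.adj_v₁_a₁, ?_, ?_, L.eq_v₃_of_adj_v₂,
    L.eq_v₃_of_adj_v₁, L.adj_v₁_v₂.symm, L.adj_v₂_v₃, L.adj_v₁_v₃, ?_, ?_, L.v₂_notMem_R,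
    L.v₁_notMem_R⟩ <;> simp only [support_reverse, List.mem_reverse]
  exacts [L.notMem_P_of_mem_R, L.eq_of_adj_P, L.eq_a₂, L.eq_a₁, L.v₂_notMem_P, L.v₁_notMem_P]

variable {A : G.Walk a₁ u} {B : G.Walk u a₂}

theorem isPath_leg (L : IsNetLinkage (A.append B) R v₁ v₂) :
    (cons L.adj_v₁_a₁ A).reverse.IsPath :=
  (L.isPath_P.of_append_left.cons fun h =>
    L.v₁_notMem_P (A.support_subset_support_append_left B h)).reverse

theorem isChordless_leg (L : IsNetLinkage (A.append B) R v₁ v₂) :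
    (cons L.adj_v₁_a₁ A).reverse.IsChordless :=
  ((L.isChordless_P.of_append_left L.isPath_P).cons L.adj_v₁_a₁ fun z hz =>
    L.eq_a₁ z (A.support_subset_support_append_left B hz)).reverse

theorem one_le_length_leg (L : IsNetLinkage (A.append B) R v₁ v₂) :
    1 ≤ (cons L.adj_v₁_a₁ A).reverse.length := by
  simp

theorem notMem_R_of_mem_leg (L : IsNetLinkage (A.append B) R v₁ v₂) :
    ∀ y ∈ (cons L.adj_v₁_a₁ A).reverse.support, y ∉ R.support := by
  simp only [support_reverse, List.mem_reverse, support_cons, List.mem_cons]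
  rintro y (rfl | hy) hyR
  · exact L.v₁_notMem_R hyR
  · exact L.notMem_P_of_mem_R y hyR (A.support_subset_support_append_left B hy)

theorem adj_leg_R (L : IsNetLinkage (A.append B) R v₁ v₂)
    (hA : ∀ y ∈ A.support, G.Adj x y → y = u) :
    ∀ y ∈ (cons L.adj_v₁_a₁ A).reverse.support, ∀ z ∈ R.support, G.Adj y z →
      (y = u ∧ z = x) ∨ (y = v₁ ∧ z = v₃) := by
  simp only [support_reverse, List.mem_reverse, support_cons, List.mem_cons]
  rintro y (rfl | hy) z hz hyz
  · exact Or.inr ⟨rfl, L.eq_v₃_of_adj_v₁ z hz hyz⟩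
  · obtain rfl := L.eq_of_adj_P z hz y (A.support_subset_support_append_left B hy) hyz.symm
    exact Or.inl ⟨hA y hy hyz.symm, rfl⟩

theorem exists_isPyramid_of_eq (L : IsNetLinkage (A.append B) R v₁ v₂) (hxu : G.Adj x u)
    (hA : ∀ y ∈ A.support, G.Adj x y → y = u) (hB : ∀ y ∈ B.support, G.Adj x y → y = u) :
    ∃ T : Set V, IsPyramid (G.induce T) := by
  have L' : IsNetLinkage (B.reverse.append A.reverse) R v₂ v₁ := reverse_append A B ▸ L.symm
  have hB' : ∀ y ∈ B.reverse.support, G.Adj x y → y = u := by simpa using hB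
  have hP := L.isPath_P
  have hAP := A.support_subset_support_append_left B
  have hBP := A.support_subset_support_append_right B
  refine exists_isPyramid_of_legs L.isPath_leg L'.isPath_leg L.isPath_R L.isChordless_leg
    L'.isChordless_leg L.isChordless_R L.one_le_length_leg L'.one_le_length_leg L.one_le_length_R
    ?_ ?_ L.notMem_R_of_mem_leg L'.notMem_R_of_mem_leg ?_ (L.adj_leg_R hA) (L'.adj_leg_R hB')
    hxu.symm L.adj_v₁_v₂ L.adj_v₂_v₃ L.adj_v₁_v₃
  all_goals simp only [support_reverse, List.mem_reverse, support_cons, List.mem_cons,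
    length_reverse, length_cons]
  · by_contra! h
    exact L.ne ((eq_of_length_eq_zero (by omega : A.length = 0)).trans
      (eq_of_length_eq_zero (by omega : B.length = 0)))
  · rintro y (rfl | hy₁) (h | hy₂)
    · exact absurd h L.adj_v₁_v₂.ne
    · exact absurd (hBP hy₂) L.v₁_notMem_P
    · exact absurd (hAP (h ▸ hy₁)) L.v₂_notMem_P
    · exact hP.eq_of_mem_support_append hy₁ hy₂
  · rintro y (rfl | hy) z (rfl | hz) hyz
    · exact Or.inr (Or.inr ⟨rfl, rfl⟩)
    · obtain rfl := L.eq_a₁ z (hBP hz) hyz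
      exact Or.inr (Or.inl (hP.eq_of_mem_support_append A.start_mem_support hz))
    · obtain rfl := L.eq_a₂ y (hAP hy) hyz.symm
      exact Or.inl (hP.eq_of_mem_support_append hy B.end_mem_support)
    · exact (L.isChordless_P.eq_or_eq_of_adj_append hP hy hz hyz).imp_right Or.inl

theorem exists_isPyramid_or_isLongPrism_of_ne {M : G.Walk u w} {B : G.Walk w a₂}
    (L : IsNetLinkage (A.append (M.append B)) R v₁ v₂) (huw : u ≠ w) (hxu : G.Adj x u)
    (hxw : G.Adj x w) (hA : ∀ y ∈ A.support, G.Adj x y → y = u)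
    (hB : ∀ y ∈ B.support, G.Adj x y → y = w) (hlong : 2 ≤ R.length ∨ ¬ G.Adj x a₁) :
    (∃ T : Set V, IsPyramid (G.induce T)) ∨ ∃ T : Set V, IsLongPrism (G.induce T) := by
  have L' : IsNetLinkage (B.reverse.append (M.reverse.append A.reverse)) R v₂ v₁ := by
    simpa only [reverse_append, append_assoc] using L.symm
  have hB' : ∀ y ∈ B.reverse.support, G.Adj x y → y = w := by simpa using hB
  have hP := L.isPath_P
  have hAB {y : V} := hP.notMem_of_append_append (y := y) huw
  have hAP := A.support_subset_support_append_left (M.append B)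
  have hBP {y : V} (hy : y ∈ B.support) : y ∈ (A.append (M.append B)).support :=
    A.support_subset_support_append_right _ (M.support_subset_support_append_right B hy)
  refine exists_isPyramid_or_isLongPrism_of_legs L.isPath_leg L'.isPath_leg L.isPath_R
    L.isChordless_leg L'.isChordless_leg L.isChordless_R L.one_le_length_leg
    L'.one_le_length_leg L.one_le_length_R ?_ ?_ L.notMem_R_of_mem_leg L'.notMem_R_of_mem_leg
    ?_ (L.adj_leg_R hA) (L'.adj_leg_R hB') hxu hxw L.adj_v₁_v₂ L.adj_v₂_v₃ L.adj_v₁_v₃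
  all_goals simp only [support_reverse, List.mem_reverse, support_cons, List.mem_cons,
    length_reverse, length_cons]
  · refine hlong.elim (fun h => Or.inr (Or.inr h)) fun h => Or.inl ?_
    have : A.length ≠ 0 := fun h₀ => h (eq_of_length_eq_zero h₀ ▸ hxu)
    omega
  · rintro y (rfl | hy₁) (h | hy₂)
    · exact L.adj_v₁_v₂.ne h
    · exact L.v₁_notMem_P (hBP hy₂)
    · exact L.v₂_notMem_P (h ▸ hAP hy₁)
    · exact hAB hy₁ hy₂
  · rintro y (rfl | hy) z (rfl | hz) hyz
    · exact Or.inr ⟨rfl, rfl⟩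
    · obtain rfl := L.eq_a₁ z (hBP hz) hyz
      exact absurd hz (hAB A.start_mem_support)
    · obtain rfl := L.eq_a₂ y (hAP hy) hyz.symm
      exact absurd B.end_mem_support (hAB hy)
    · exact Or.inl (L.isChordless_P.eq_and_eq_of_adj_append_append hP huw hy hz hyz)

theorem exists_isPyramid_or_isLongPrism (L : IsNetLinkage P R v₁ v₂)
    (hx : ∃ z ∈ P.support, G.Adj x z) (hlong : 2 ≤ R.length ∨ ¬ G.Adj x a₁) :
    (∃ T : Set V, IsPyramid (G.induce T)) ∨ ∃ T : Set V, IsLongPrism (G.induce T) := by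
  obtain ⟨u, hxu, A, P', rfl, hA⟩ := P.exists_eq_append_first_mem {y | G.Adj x y} hx
  obtain ⟨w, hxw, M, B, rfl, hB⟩ :=
    P'.exists_eq_append_last_mem {y | G.Adj x y} ⟨u, P'.start_mem_support, hxu⟩
  by_cases huw : u = w
  · subst huw
    obtain rfl : M = nil :=
      eq_nil_iff_nil.mpr (isPath_iff_nil.mp L.isPath_P.of_append_right.of_append_left)
    rw [nil_append] at L
    exact Or.inl (L.exists_isPyramid_of_eq hxu hA hB)
  · exact L.exists_isPyramid_or_isLongPrism_of_ne huw hxu hxw hA hB hlong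

end IsNetLinkage

end Linkage

section Net

variable {V : Type*} {G : SimpleGraph V} {a₁ a₂ a₃ v₁ v₂ v₃ : V}

structure IsNet (G : SimpleGraph V) (a₁ a₂ a₃ v₁ v₂ v₃ : V) : Prop where
  adj_v₁_v₂ : G.Adj v₁ v₂
  adj_v₂_v₃ : G.Adj v₂ v₃
  adj_v₁_v₃ : G.Adj v₁ v₃
  adj_v₁_a₁ : G.Adj v₁ a₁
  adj_v₂_a₂ : G.Adj v₂ a₂
  adj_v₃_a₃ : G.Adj v₃ a₃
  ne_a₁_a₂ : a₁ ≠ a₂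
  ne_a₁_a₃ : a₁ ≠ a₃
  ne_a₂_a₃ : a₂ ≠ a₃
  ne_v₁_a₂ : v₁ ≠ a₂
  ne_v₁_a₃ : v₁ ≠ a₃
  ne_v₂_a₁ : v₂ ≠ a₁
  ne_v₂_a₃ : v₂ ≠ a₃
  ne_v₃_a₁ : v₃ ≠ a₁
  ne_v₃_a₂ : v₃ ≠ a₂
  not_adj_a₁_a₂ : ¬ G.Adj a₁ a₂
  not_adj_a₁_a₃ : ¬ G.Adj a₁ a₃
  not_adj_a₂_a₃ : ¬ G.Adj a₂ a₃
  not_adj_v₁_a₂ : ¬ G.Adj v₁ a₂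
  not_adj_v₁_a₃ : ¬ G.Adj v₁ a₃
  not_adj_v₂_a₁ : ¬ G.Adj v₂ a₁
  not_adj_v₂_a₃ : ¬ G.Adj v₂ a₃
  not_adj_v₃_a₁ : ¬ G.Adj v₃ a₁
  not_adj_v₃_a₂ : ¬ G.Adj v₃ a₂

theorem isNet_of_nodup_of_adj_iff (hnodup : [a₁, a₂, a₃, v₁, v₂, v₃].Nodup)
    (hadj : ∀ x ∈ [a₁, a₂, a₃, v₁, v₂, v₃], ∀ y ∈ [a₁, a₂, a₃, v₁, v₂, v₃],
      (G.Adj x y ↔ s(x, y) ∈ ({s(v₁, v₂), s(v₂, v₃), s(v₃, v₁),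
        s(a₁, v₁), s(a₂, v₂), s(a₃, v₃)} : Set (Sym2 V)))) :
    IsNet G a₁ a₂ a₃ v₁ v₂ v₃ := by
  simp only [List.nodup_cons, List.mem_cons, List.not_mem_nil, or_false, List.nodup_nil, and_true,
    not_or] at hnodup
  obtain ⟨⟨h₁₂, h₁₃, h₁₄, h₁₅, h₁₆⟩, ⟨h₂₃, h₂₄, h₂₅, h₂₆⟩, ⟨h₃₄, h₃₅, h₃₆⟩, ⟨h₄₅, h₄₆⟩, h₅₆, -⟩ :=
    hnodup
  simp [h₁₂, h₁₃, h₁₄, h₁₅, h₁₆, h₂₃, h₂₄, h₂₅, h₂₆, h₃₄, h₃₅, h₃₆, h₄₅, h₄₆, h₅₆,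
    Ne.symm h₁₂, Ne.symm h₁₃, Ne.symm h₁₄, Ne.symm h₁₅, Ne.symm h₁₆, Ne.symm h₂₃, Ne.symm h₂₄,
    Ne.symm h₂₅, Ne.symm h₂₆, Ne.symm h₃₄, Ne.symm h₃₅, Ne.symm h₃₆, Ne.symm h₄₅, Ne.symm h₄₆,
    Ne.symm h₅₆] at hadj
  obtain ⟨⟨n₁₂, n₁₃, -⟩, ⟨-, n₂₃, -⟩, -, ⟨e₁, n₁a₂, n₁a₃, e₁₂, e₁₃⟩, ⟨n₂a₁, e₂, n₂a₃, -, e₂₃⟩,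
    n₃a₁, n₃a₂, e₃, -⟩ := hadj
  exact ⟨e₁₂, e₂₃, e₁₃, e₁, e₂, e₃, h₁₂, h₁₃, h₂₃, Ne.symm h₂₄, Ne.symm h₃₄, Ne.symm h₁₅,
    Ne.symm h₃₅, Ne.symm h₁₆, Ne.symm h₂₆, n₁₂, n₁₃, n₂₃, n₁a₂, n₁a₃, n₂a₁, n₂a₃, n₃a₁, n₃a₂⟩

namespace IsNet

variable {x : V} {C : Set V}

theorem isNetLinkage (N : IsNet G a₁ a₂ a₃ v₁ v₂ v₃)
    (hC : ∀ c ∈ C, ¬ G.Adj v₁ c ∧ ¬ G.Adj v₂ c ∧ ¬ G.Adj v₃ c) {P : G.Walk a₁ a₂}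
    {R : G.Walk x v₃} (hP : P.IsPath) (hPc : P.IsChordless)
    (hPC : ∀ y ∈ P.support, y = a₁ ∨ y = a₂ ∨ y ∈ C) (hR : R.IsPath) (hRc : R.IsChordless)
    (hRC : ∀ y ∈ R.support, (y = v₃ ∨ y = a₃ ∨ y ∈ C) ∧ y ∉ P.support ∧
      ∀ z ∈ P.support, G.Adj y z → y = x) (hxv₃ : x ≠ v₃) :
    IsNetLinkage P R v₁ v₂ := by
  have hv₁C : v₁ ∉ C := fun h => (hC v₁ h).2.1 N.adj_v₁_v₂.symm
  have hv₂C : v₂ ∉ C := fun h => (hC v₂ h).1 N.adj_v₁_v₂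
  refine ⟨hP, hPc, N.ne_a₁_a₂, hR, hRc, ?_, fun y hy => (hRC y hy).2.1,
    fun y hy => (hRC y hy).2.2, N.adj_v₁_a₁, N.adj_v₂_a₂, fun z hz h => ?_, fun z hz h => ?_,
    fun y hy h => ?_, fun y hy h => ?_, N.adj_v₁_v₂, N.adj_v₁_v₃, N.adj_v₂_v₃, fun h => ?_,
    fun h => ?_, fun h => ?_, fun h => ?_⟩
  · by_contra! h
    exact hxv₃ (eq_of_length_eq_zero (p := R) (by omega))
  · rcases hPC z hz with rfl | rfl | hzC
    exacts [rfl, absurd h N.not_adj_v₁_a₂, absurd h (hC z hzC).1]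
  · rcases hPC z hz with rfl | rfl | hzC
    exacts [absurd h N.not_adj_v₂_a₁, rfl, absurd h (hC z hzC).2.1]
  · rcases (hRC y hy).1 with rfl | rfl | hyC
    exacts [rfl, absurd h N.not_adj_v₁_a₃, absurd h (hC y hyC).1]
  · rcases (hRC y hy).1 with rfl | rfl | hyC
    exacts [rfl, absurd h N.not_adj_v₂_a₃, absurd h (hC y hyC).2.1]
  · rcases hPC v₁ h with h | h | h
    exacts [N.adj_v₁_a₁.ne h, N.ne_v₁_a₂ h, hv₁C h]
  · rcases hPC v₂ h with h | h | h
    exacts [N.ne_v₂_a₁ h, N.adj_v₂_a₂.ne h, hv₂C h]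
  · rcases (hRC v₁ h).1 with h | h | h
    exacts [N.adj_v₁_v₃.ne h, N.ne_v₁_a₃ h, hv₁C h]
  · rcases (hRC v₂ h).1 with h | h | h
    exacts [N.adj_v₂_v₃.ne h, N.ne_v₂_a₃ h, hv₂C h]

theorem two_le_length_or_not_adj_a₁ (N : IsNet G a₁ a₂ a₃ v₁ v₂ v₃)
    (hC : ∀ c ∈ C, ¬ G.Adj v₁ c ∧ ¬ G.Adj v₂ c ∧ ¬ G.Adj v₃ c) {R : G.Walk x v₃}
    (hRC : ∀ y ∈ R.support, y = v₃ ∨ y = a₃ ∨ y ∈ C) (hxv₃ : x ≠ v₃) :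
    2 ≤ R.length ∨ ¬ G.Adj x a₁ := by
  by_contra! h
  have h₀ : R.length ≠ 0 := fun h₀ => hxv₃ (eq_of_length_eq_zero h₀)
  have hxv₃' : G.Adj x v₃ := R.adj_of_length_eq_one (by omega)
  rcases hRC x R.start_mem_support with rfl | rfl | hxC
  exacts [hxv₃ rfl, N.not_adj_a₁_a₃ h.2.symm, (hC x hxC).2.2 hxv₃'.symm]

theorem exists_isNetLinkage (N : IsNet G a₁ a₂ a₃ v₁ v₂ v₃)
    (hC : ∀ c ∈ C, ¬ G.Adj v₁ c ∧ ¬ G.Adj v₂ c ∧ ¬ G.Adj v₃ c) (hCconn : (G.induce C).Connected)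
    (h₁ : ∃ c ∈ C, G.Adj a₁ c) (h₂ : ∃ c ∈ C, G.Adj a₂ c) (h₃ : ∃ c ∈ C, G.Adj a₃ c) :
    ∃ (x : V) (P : G.Walk a₁ a₂) (R : G.Walk x v₃), IsNetLinkage P R v₁ v₂ ∧
      (∃ z ∈ P.support, G.Adj x z) ∧ (2 ≤ R.length ∨ ¬ G.Adj x a₁) := by
  obtain ⟨c₁, hc₁, ha₁⟩ := h₁
  obtain ⟨c₂, hc₂, ha₂⟩ := h₂
  obtain ⟨c₃, hc₃, ha₃⟩ := h₃
  obtain ⟨W, hW⟩ := hCconn.exists_walk_of_adj_of_adj hc₁ hc₂ ha₁ ha₂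
  obtain ⟨P, hP, hPc, hPW⟩ := W.exists_isPath_isChordless
  have hPC : ∀ y ∈ P.support, y = a₁ ∨ y = a₂ ∨ y ∈ C := fun y hy => hW y (hPW y hy)
  have hv₃P : ∀ z ∈ P.support, ¬ G.Adj v₃ z := fun z hz h => by
    rcases hPC z hz with rfl | rfl | hzC
    exacts [N.not_adj_v₃_a₁ h, N.not_adj_v₃_a₂ h, (hC z hzC).2.2 h]
  have hv₃P' : v₃ ∉ P.support := fun h => by
    rcases hPC v₃ h with h | h | h
    exacts [N.ne_v₃_a₁ h, N.ne_v₃_a₂ h, (hC v₃ h).1 N.adj_v₁_v₃]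
  obtain ⟨W', hW'⟩ := hCconn.exists_walk_of_adj_of_adj hc₃ hc₁ ha₃ ha₁
  obtain ⟨x, ⟨z, hz, hxz⟩, Q, hQ, hQc, hQs⟩ :=
    (cons N.adj_v₃_a₃ W').exists_isPath_isChordless_to_adj (D := {y | y ∈ P.support}) hv₃P'
      P.start_mem_support
  have hQC : ∀ y ∈ Q.reverse.support, (y = v₃ ∨ y = a₃ ∨ y ∈ C) ∧ y ∉ P.support ∧
      ∀ z ∈ P.support, G.Adj y z → y = x := fun y hy => by
    rw [support_reverse, List.mem_reverse] at hy
    obtain ⟨hyW, hyP, hyx⟩ := hQs y hy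
    refine ⟨?_, hyP, hyx⟩
    rw [support_cons, List.mem_cons] at hyW
    rcases hyW with h | h
    · exact Or.inl h
    rcases hW' y h with h | rfl | h
    exacts [Or.inr (Or.inl h), absurd P.start_mem_support hyP, Or.inr (Or.inr h)]
  have hxv₃ : x ≠ v₃ := by
    rintro rfl
    exact hv₃P z hz hxz
  exact ⟨x, P, Q.reverse, N.isNetLinkage hC hP hPc hPC hQ.reverse hQc.reverse hQC hxv₃,
    ⟨z, hz, hxz⟩, N.two_le_length_or_not_adj_a₁ hC (fun y hy => (hQC y hy).1) hxv₃⟩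

end IsNet

end Net

theorem stmt19_general {V : Type u} (G : SimpleGraph V)
    (hpyr : ∀ T : Set V, ¬ IsPyramid (G.induce T))
    (a₁ a₂ a₃ v₁ v₂ v₃ : V)
    (hnodup : [a₁, a₂, a₃, v₁, v₂, v₃].Nodup)
    (hadj : ∀ x ∈ [a₁, a₂, a₃, v₁, v₂, v₃], ∀ y ∈ [a₁, a₂, a₃, v₁, v₂, v₃],
      (G.Adj x y ↔ s(x, y) ∈ ({s(v₁, v₂), s(v₂, v₃), s(v₃, v₁),
        s(a₁, v₁), s(a₂, v₂), s(a₃, v₃)} : Set (Sym2 V))))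
    (C : Set V)
    (hCav : ∀ u ∈ C, ¬ G.Adj v₁ u ∧ ¬ G.Adj v₂ u ∧ ¬ G.Adj v₃ u)
    (hCconn : (G.induce C).Connected)
    (h1 : ∃ u ∈ C, G.Adj a₁ u) (h2 : ∃ u ∈ C, G.Adj a₂ u)
    (h3 : ∃ u ∈ C, G.Adj a₃ u) :
    ∃ T : Set V, IsLongPrism (G.induce T) := by
  obtain ⟨x, P, R, L, hx, hlong⟩ :=
    (isNet_of_nodup_of_adj_iff hnodup hadj).exists_isNetLinkage hCav hCconn h1 h2 h3
  exact (L.exists_isPyramid_or_isLongPrism hx hlong).resolve_left fun ⟨T, hT⟩ => hpyr T hT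

/-- Step 2 of the long-prism detection algorithm: in a pyramid-free graph, an
induced net plus a component of `G − (N(v₁) ∪ N(v₂) ∪ N(v₃))` containing neighbors
of `a₁`, `a₂`, and `a₃` yields an induced long prism. -/
theorem stmt19 {V : Type u} [Fintype V] (G : SimpleGraph V)
    (hpyr : ∀ T : Set V, ¬ IsPyramid (G.induce T))
    (a₁ a₂ a₃ v₁ v₂ v₃ : V)
    (hnodup : [a₁, a₂, a₃, v₁, v₂, v₃].Nodup)
    (hadj : ∀ x ∈ [a₁, a₂, a₃, v₁, v₂, v₃], ∀ y ∈ [a₁, a₂, a₃, v₁, v₂, v₃],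
      (G.Adj x y ↔ s(x, y) ∈ ({s(v₁, v₂), s(v₂, v₃), s(v₃, v₁),
        s(a₁, v₁), s(a₂, v₂), s(a₃, v₃)} : Set (Sym2 V))))
    (C : Set V)
    (hCav : ∀ u ∈ C, ¬ G.Adj v₁ u ∧ ¬ G.Adj v₂ u ∧ ¬ G.Adj v₃ u)
    (hCconn : (G.induce C).Connected)
    (hCmax : ∀ u ∈ C, ∀ w : V, w ∉ C →
      (¬ G.Adj v₁ w ∧ ¬ G.Adj v₂ w ∧ ¬ G.Adj v₃ w) → ¬ G.Adj u w)
    (h1 : ∃ u ∈ C, G.Adj a₁ u) (h2 : ∃ u ∈ C, G.Adj a₂ u)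
    (h3 : ∃ u ∈ C, G.Adj a₃ u) :
    ∃ T : Set V, IsLongPrism (G.induce T) :=
  stmt19_general G hpyr a₁ a₂ a₃ v₁ v₂ v₃ hnodup hadj C hCav hCconn h1 h2 h3
end
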